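/- arXiv:2401.09251 — 7 statements merged into one kernel-verified Lean document; each statement's English description precedes it below -/
import Mathlib

section
/- Let F: [0,1]^n → [0,∞) be a nonnegative continuously differentiable DR-submodular function. Then: (1) ⟨∇F(x), y⟩ ≥ F(x + y) − F(x) for every x ∈ [0,1]^n and every y ≥ 0 with x + y ≤ 1; and (2) ⟨∇F(x), y⟩ ≤ F(x) − F(x − y) for every x ∈ [0,1]^n and every y ≥ 0 with x − y ≥ 0. -/
open scoped InnerProductSpace
open Pointwise

noncomputable section

/-- Vectors in `ℝ^n`, with the Euclidean (ℓ₂) norm and inner product. -/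
abbrev Vec (n : ℕ) := EuclideanSpace ℝ (Fin n)

/-- Membership in the box `[0,1]^n`. -/
def inBox {n : ℕ} (x : Vec n) : Prop := ∀ j, 0 ≤ x j ∧ x j ≤ 1

/-- Coordinate-wise (Hadamard) product `x ⊙ y`. -/
def had {n : ℕ} (x y : Vec n) : Vec n := WithLp.toLp 2 (fun j => x j * y j)

/-- Coordinate-wise probabilistic sum `x ⊛ y`. -/
def psum {n : ℕ} (x y : Vec n) : Vec n := WithLp.toLp 2 (fun j => x j + y j - x j * y j)

/-- The vector `1 - x` (coordinate-wise). -/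
def oneM {n : ℕ} (x : Vec n) : Vec n := WithLp.toLp 2 (fun j => 1 - x j)

/-- ℓ∞-norm. -/
def normInf {n : ℕ} (x : Vec n) : ℝ := ⨆ j, |x j|

/-- DR-submodularity of `F : [0,1]^n → ℝ`. -/
def DRSubmodular {n : ℕ} (F : Vec n → ℝ) : Prop :=
  ∀ a b : Vec n, inBox a → inBox b → (∀ j, a j ≤ b j) →
    ∀ k : ℝ, 0 < k → ∀ i : Fin n, inBox (b + EuclideanSpace.single i k) →
      F (b + EuclideanSpace.single i k) - F b ≤ F (a + EuclideanSpace.single i k) - F a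

/-- `P` is down-closed (with respect to the domain `[0,1]^n`). -/
def downClosed {n : ℕ} (P : Set (Vec n)) : Prop :=
  ∀ x y : Vec n, (∀ j, 0 ≤ x j) → (∀ j, x j ≤ y j) → y ∈ P → x ∈ P

/-!
DR-submodularity forces the gradient to be antitone on `[0,1]^n`: the `j`-th partial derivative
is a limit of marginal gains along `eⱼ`, and these can only decrease as the base point increases.
On a segment from `a` to `b ≥ a` the mean value theorem gives
`F b - F a = ⟪∇F(p), b - a⟫` for some `a ≤ p ≤ b`, so with `b - a ≥ 0` we get
`⟪∇F(b), b - a⟫ ≤ F b - F a ≤ ⟪∇F(a), b - a⟫`. Both claims are instances of this sandwich.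
-/

open Filter Set Topology

section Gradient

variable {E : Type*} [NormedAddCommGroup E] [InnerProductSpace ℝ E] [CompleteSpace E]
  {f : E → ℝ} {g c : E}

theorem HasGradientAt.hasDerivAt_comp_add_smul {v : E} {t : ℝ}
    (h : HasGradientAt f g (c + t • v)) :
    HasDerivAt (fun s : ℝ => f (c + s • v)) ⟪g, v⟫_ℝ t := by
  have hline : HasDerivAt (fun s : ℝ => c + s • v) v t := by
    simpa using ((hasDerivAt_id t).smul_const v).const_add c
  exact h.hasFDerivAt.comp_hasDerivAt t hline

theorem HasGradientAt.tendsto_slope_right (h : HasGradientAt f g c) (v : E) :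
    Tendsto (fun k : ℝ => (f (c + k • v) - f c) / k) (𝓝[>] 0) (𝓝 ⟪g, v⟫_ℝ) := by
  have := (HasGradientAt.hasDerivAt_comp_add_smul (v := v) (t := 0)
    (by simpa using h)).tendsto_slope_zero_right
  simpa [div_eq_inv_mul] using this

theorem HasGradientAt.tendsto_slope_left (h : HasGradientAt f g c) (v : E) :
    Tendsto (fun k : ℝ => (f c - f (c - k • v)) / k) (𝓝[>] 0) (𝓝 ⟪g, v⟫_ℝ) := by
  have := (h.tendsto_slope_right (-v)).neg
  simpa [inner_neg_right, ← sub_eq_add_neg, neg_div', neg_sub] using this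

end Gradient

theorem EuclideanSpace.inner_le_inner_of_le {ι : Type*} [Fintype ι]
    {u v y : EuclideanSpace ℝ ι} (huv : ∀ i, u i ≤ v i) (hy : ∀ i, 0 ≤ y i) :
    ⟪u, y⟫_ℝ ≤ ⟪v, y⟫_ℝ := by
  simp only [PiLp.inner_apply, RCLike.inner_apply, conj_trivial]
  exact Finset.sum_le_sum fun i _ => mul_le_mul_of_nonneg_left (huv i) (hy i)

section Box

variable {n : ℕ}

theorem inBox_of_le_of_le {a b c : Vec n} (ha : inBox a) (hb : inBox b) (hac : ∀ j, a j ≤ c j)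
    (hcb : ∀ j, c j ≤ b j) : inBox c :=
  fun j => ⟨(ha j).1.trans (hac j), (hcb j).trans (hb j).2⟩

theorem add_smul_single_apply (c : Vec n) (j : Fin n) (k : ℝ) (i : Fin n) :
    (c + k • EuclideanSpace.single j (1 : ℝ) : Vec n) i = c i + if i = j then k else 0 := by
  simp

theorem sub_smul_single_apply (c : Vec n) (j : Fin n) (k : ℝ) (i : Fin n) :
    (c - k • EuclideanSpace.single j (1 : ℝ) : Vec n) i = c i - if i = j then k else 0 := by
  simp

theorem inBox_add_smul_single {c : Vec n} (hc : inBox c) {j : Fin n} {k : ℝ} (hk : 0 ≤ k)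
    (hkj : c j + k ≤ 1) : inBox (c + k • EuclideanSpace.single j 1) := by
  intro i
  rw [add_smul_single_apply]
  split_ifs with hij
  · subst hij; constructor <;> linarith [(hc i).1]
  · simpa using hc i

theorem inBox_sub_smul_single {c : Vec n} (hc : inBox c) {j : Fin n} {k : ℝ} (hk : 0 ≤ k)
    (hkj : k ≤ c j) : inBox (c - k • EuclideanSpace.single j 1) := by
  intro i
  rw [sub_smul_single_apply]
  split_ifs with hij
  · subst hij; constructor <;> linarith [(hc i).2]
  · simpa using hc i

end Box

namespace DRSubmodular

variable {n : ℕ} {F : Vec n → ℝ} {G : Vec n → Vec n}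

theorem marginal_antitone (hDR : DRSubmodular F) {c d : Vec n} (hc : inBox c) (hd : inBox d)
    (hcd : ∀ i, c i ≤ d i) {j : Fin n} {k : ℝ} (hk : 0 < k) (hdk : d j + k ≤ 1) :
    F (d + k • EuclideanSpace.single j 1) - F d ≤
      F (c + k • EuclideanSpace.single j 1) - F c := by
  have hsingle : EuclideanSpace.single j k = k • EuclideanSpace.single j (1 : ℝ) := by
    ext i; simp
  simpa [hsingle] using
    hDR c d hc hd hcd k hk j (by simpa [hsingle] using inBox_add_smul_single hd hk.le hdk)

theorem grad_apply_antitone (hDR : DRSubmodular F)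
    (hGrad : ∀ x, inBox x → HasGradientAt F (G x) x) {a b : Vec n} (ha : inBox a)
    (hb : inBox b) (hab : ∀ i, a i ≤ b i) (j : Fin n) : G b j ≤ G a j := by
  set e : Vec n := EuclideanSpace.single j 1
  have hright : ∀ c, inBox c →
      Tendsto (fun k : ℝ => (F (c + k • e) - F c) / k) (𝓝[>] 0) (𝓝 (G c j)) := fun c hc => by
    simpa [e, EuclideanSpace.inner_single_right] using (hGrad c hc).tendsto_slope_right e
  have hleft : ∀ c, inBox c →
      Tendsto (fun k : ℝ => (F c - F (c - k • e)) / k) (𝓝[>] 0) (𝓝 (G c j)) := fun c hc => by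
    simpa [e, EuclideanSpace.inner_single_right] using (hGrad c hc).tendsto_slope_left e
  -- A marginal gain along `e` is only available inside the box, so at `bⱼ = 1` the
  -- derivative at `b` is read off a left slope, and at `aⱼ = 1` also the one at `a`.
  obtain hbj | hbj := (hb j).2.lt_or_eq
  · refine le_of_tendsto_of_tendsto (hright b hb) (hright a ha) ?_
    filter_upwards [Ioo_mem_nhdsGT (sub_pos.2 hbj)] with k hk
    exact div_le_div_of_nonneg_right
      (hDR.marginal_antitone ha hb hab hk.1 (by linarith [hk.2])) hk.1.le
  obtain hab' | hab' := (hab j).lt_or_eq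
  · refine le_of_tendsto_of_tendsto (hleft b hb) (hright a ha) ?_
    filter_upwards [Ioo_mem_nhdsGT (sub_pos.2 hab')] with k hk
    have hbk : inBox (b - k • e) :=
      inBox_sub_smul_single hb hk.1.le (by linarith [hk.2, (ha j).1])
    have habk : ∀ i, a i ≤ (b - k • e) i := by
      intro i
      rw [sub_smul_single_apply]
      split_ifs with hij
      · subst hij; linarith [hk.2]
      · simpa using hab i
    have := hDR.marginal_antitone (j := j) ha hbk habk hk.1 (by simp [e, hbj])
    rw [sub_add_cancel] at this
    exact div_le_div_of_nonneg_right this hk.1.le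
  · refine le_of_tendsto_of_tendsto (hleft b hb) (hleft a ha) ?_
    filter_upwards [Ioo_mem_nhdsGT zero_lt_one] with k hk
    have hak : inBox (a - k • e) := inBox_sub_smul_single ha hk.1.le (by linarith [hk.2])
    have hbk : inBox (b - k • e) := inBox_sub_smul_single hb hk.1.le (by linarith [hk.2])
    have := hDR.marginal_antitone (j := j) hak hbk (fun i => by simpa using hab i) hk.1
      (by simp [e, hbj])
    rw [sub_add_cancel, sub_add_cancel] at this
    exact div_le_div_of_nonneg_right this hk.1.le

theorem inner_grad_le_sub_le_inner_grad (hDR : DRSubmodular F)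
    (hGrad : ∀ x, inBox x → HasGradientAt F (G x) x) {a b : Vec n} (ha : inBox a)
    (hb : inBox b) (hab : ∀ i, a i ≤ b i) :
    ⟪G b, b - a⟫_ℝ ≤ F b - F a ∧ F b - F a ≤ ⟪G a, b - a⟫_ℝ := by
  set p : ℝ → Vec n := fun t => a + t • (b - a)
  have hp_apply : ∀ t i, p t i = a i + t * (b i - a i) := fun t i => by simp [p]
  have hp_between : ∀ t ∈ Icc (0 : ℝ) 1, (∀ i, a i ≤ p t i) ∧ ∀ i, p t i ≤ b i :=
    fun t ht => ⟨fun i => by nlinarith [hp_apply t i, hab i, ht.1],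
      fun i => by nlinarith [hp_apply t i, hab i, ht.2]⟩
  have hp_box : ∀ t ∈ Icc (0 : ℝ) 1, inBox (p t) := fun t ht =>
    inBox_of_le_of_le ha hb (hp_between t ht).1 (hp_between t ht).2
  have hderiv : ∀ t ∈ Icc (0 : ℝ) 1, HasDerivAt (fun s => F (p s)) ⟪G (p t), b - a⟫_ℝ t :=
    fun t ht => (hGrad _ (hp_box t ht)).hasDerivAt_comp_add_smul
  obtain ⟨t, ht, hslope⟩ := exists_hasDerivAt_eq_slope (fun s => F (p s)) _ zero_lt_one
    (fun s hs => (hderiv s hs).continuousAt.continuousWithinAt)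
    (fun s hs => hderiv s (Ioo_subset_Icc_self hs))
  have hmean : ⟪G (p t), b - a⟫_ℝ = F b - F a := by simpa [p] using hslope
  have hba : ∀ i, 0 ≤ (b - a) i := fun i => by simpa using hab i
  have ht' := Ioo_subset_Icc_self ht
  rw [← hmean]
  exact ⟨EuclideanSpace.inner_le_inner_of_le
      (hDR.grad_apply_antitone hGrad (hp_box t ht') hb (hp_between t ht').2) hba,
    EuclideanSpace.inner_le_inner_of_le
      (hDR.grad_apply_antitone hGrad ha (hp_box t ht') (hp_between t ht').1) hba⟩

end DRSubmodular

theorem stmt_0_general {n : ℕ} (F : Vec n → ℝ) (G : Vec n → Vec n)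
    (hGrad : ∀ x, inBox x → HasGradientAt F (G x) x)
    (hDR : DRSubmodular F) :
    (∀ x y : Vec n, inBox x → (∀ j, 0 ≤ y j) → (∀ j, x j + y j ≤ 1) →
      F (x + y) - F x ≤ ⟪G x, y⟫_ℝ) ∧
    (∀ x y : Vec n, inBox x → (∀ j, 0 ≤ y j) → (∀ j, 0 ≤ x j - y j) →
      ⟪G x, y⟫_ℝ ≤ F x - F (x - y)) := by
  refine ⟨fun x y hx hy hxy => ?_, fun x y hx hy hxy => ?_⟩
  · have hbox : inBox (x + y) := fun j =>
      ⟨by rw [PiLp.add_apply]; linarith [(hx j).1, hy j], by simpa using hxy j⟩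
    simpa using (hDR.inner_grad_le_sub_le_inner_grad hGrad hx hbox
      fun j => by simpa using hy j).2
  · have hbox : inBox (x - y) := fun j =>
      ⟨by simpa using hxy j, by rw [PiLp.sub_apply]; linarith [(hx j).2, hy j]⟩
    simpa using (hDR.inner_grad_le_sub_le_inner_grad hGrad hbox hx
      fun j => by simpa using hy j).1

/-- Lemma 2.1 / `lem:DR_properties`: for a nonnegative continuously
differentiable DR-submodular `F` on `[0,1]^n` with gradient `G`:
(1) `⟪∇F(x), y⟫ ≥ F(x+y) − F(x)` whenever `x ∈ [0,1]^n`, `y ≥ 0` and `x + y ≤ 1`;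
(2) `⟪∇F(x), y⟫ ≤ F(x) − F(x−y)` whenever `x ∈ [0,1]^n`, `y ≥ 0` and `x − y ≥ 0`. -/
theorem stmt_0 {n : ℕ} (F : Vec n → ℝ) (G : Vec n → Vec n)
    (hF0 : ∀ x, inBox x → 0 ≤ F x)
    (hGrad : ∀ x, inBox x → HasGradientAt F (G x) x)
    (hGcont : ContinuousOn G {x : Vec n | inBox x})
    (hDR : DRSubmodular F) :
    (∀ x y : Vec n, inBox x → (∀ j, 0 ≤ y j) → (∀ j, x j + y j ≤ 1) →
      F (x + y) - F x ≤ ⟪G x, y⟫_ℝ) ∧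
    (∀ x y : Vec n, inBox x → (∀ j, 0 ≤ y j) → (∀ j, 0 ≤ x j - y j) →
      ⟪G x, y⟫_ℝ ≤ F x - F (x - y)) :=
  stmt_0_general F G hGrad hDR
end
end

section
/- Let F: [0,1]^n → [0,∞) be a nonnegative DR-submodular function and let x, y ∈ [0,1]^n. Then F(x⊛y) ≥ (1 − ‖y‖∞)·F(x). -/
open scoped InnerProductSpace
open Pointwise

noncomputable section

/-!
Put `m = ‖y‖∞` and `g t = F (x + t • ((1 - x) ⊙ y))`: the ray stays in the box for
`0 ≤ t ≤ 1 / m` and meets `x ⊛ y` at `t = 1`, and DR-submodularity makes the increments of `g`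
over steps of equal length non-increasing. For a concave `g ≥ 0`, the bound `g 1 ≥ (1 - m) g 0`
would follow from `1 = (1 - m) • 0 + m • (1 / m)`. Since `F` has no regularity, the comparison is
made on the grids `(1 / q) ℕ` instead: averaging increments gives `(p - q) g 0 ≤ p g 1` whenever
`p / q ≤ 1 / m`, and `q / p` can be taken arbitrarily close to `m`.
-/

open Finset

/-- Wright concavity: weaker than concavity for functions without any regularity. -/
def WrightConcaveOn (g : ℝ → ℝ) (I : Set ℝ) : Prop :=
  ∀ ⦃t₁ t₂ h : ℝ⦄, t₁ ∈ I → t₂ + h ∈ I → t₁ ≤ t₂ → 0 ≤ h →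
    g (t₂ + h) - g t₂ ≤ g (t₁ + h) - g t₁

theorem mul_sub_le_mul_sub_of_antitone_increments (G : ℕ → ℝ) {p q : ℕ} (hqp : q ≤ p)
    (hG : ∀ i j, i ≤ j → j < p → G (j + 1) - G j ≤ G (i + 1) - G i) :
    q * (G p - G 0) ≤ p * (G q - G 0) := by
  induction p, hqp using Nat.le_induction with
  | base => rfl
  | succ p hqp ih =>
    have hstep : q * (G (p + 1) - G p) ≤ G q - G 0 := by
      rw [← Finset.sum_range_sub]
      calc (q : ℝ) * (G (p + 1) - G p)
          = ∑ _i ∈ range q, (G (p + 1) - G p) := by rw [sum_const, card_range, nsmul_eq_mul]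
        _ ≤ ∑ i ∈ range q, (G (i + 1) - G i) := sum_le_sum fun i hi =>
          hG i p ((mem_range.1 hi).le.trans hqp) (lt_add_one p)
    have := ih fun i j hij hj => hG i j hij (hj.trans (lt_add_one p))
    push_cast
    linarith

section WrightConcave

variable {g : ℝ → ℝ} {m s : ℝ}

theorem WrightConcaveOn.sub_mul_le_of_grid (hg : WrightConcaveOn g {t | 0 ≤ t ∧ m * t ≤ 1})
    (hg0 : ∀ t, 0 ≤ t → m * t ≤ 1 → 0 ≤ g t) (hm : 0 ≤ m) (hs : 0 ≤ s) {p q : ℕ} (hq : 0 < q)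
    (hqp : q ≤ p) (hpq : m * s * p ≤ q) :
    (p - q) * g 0 ≤ p * g s := by
  have hq' : (0 : ℝ) < q := Nat.cast_pos.2 hq
  set h := s / q with hh
  have hgrid : ∀ j ≤ p, 0 ≤ j * h ∧ m * (j * h) ≤ 1 := by
    intro j hj
    refine ⟨by positivity, ?_⟩
    calc m * (j * h) = m * s * j / q := by rw [hh]; ring
      _ ≤ m * s * p / q := by gcongr
      _ ≤ 1 := (div_le_one hq').2 hpq
  have hG := mul_sub_le_mul_sub_of_antitone_increments (fun j => g (j * h)) hqp
    fun i j hij hjp => by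
      have := hg (hgrid i (hij.trans hjp.le)) (by simpa [add_mul] using hgrid (j + 1) hjp)
        (by gcongr) (by positivity)
      simpa [add_mul] using this
  have hqh : (q : ℝ) * h = s := mul_div_cancel₀ s hq'.ne'
  have hgp : 0 ≤ g (p * h) := hg0 _ (hgrid p le_rfl).1 (hgrid p le_rfl).2
  simp only [hqh, Nat.cast_zero, zero_mul] at hG
  nlinarith [mul_nonneg hq'.le hgp]

theorem WrightConcaveOn.one_sub_mul_le (hg : WrightConcaveOn g {t | 0 ≤ t ∧ m * t ≤ 1})
    (hg0 : ∀ t, 0 ≤ t → m * t ≤ 1 → 0 ≤ g t) (hm : 0 ≤ m) (hs : 0 ≤ s) (hms : m * s ≤ 1) :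
    (1 - m * s) * g 0 ≤ g s := by
  have hg00 : 0 ≤ g 0 := hg0 0 le_rfl (by simp)
  have hbound : ∀ p : ℕ, 0 < p → p * ((1 - m * s) * g 0 - g s) ≤ g 0 := by
    intro p hp
    have hmsp : 0 ≤ m * s * p := by positivity
    -- `q / p` is the smallest fraction with denominator `p` above `m s`, kept positive
    set q := max 1 ⌈m * s * p⌉₊
    have hq : (q : ℝ) ≤ m * s * p + 1 := by
      rw [Nat.cast_max, Nat.cast_one, max_le_iff]
      exact ⟨by linarith, (Nat.ceil_lt_add_one hmsp).le⟩
    have hqp : q ≤ p := max_le hp (Nat.ceil_le.2 (by nlinarith))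
    have := hg.sub_mul_le_of_grid hg0 hm hs (le_max_left 1 _) hqp
      ((Nat.le_ceil _).trans (Nat.cast_le.2 (le_max_right _ _)))
    nlinarith [mul_le_mul_of_nonneg_right hq hg00]
  by_contra hlt
  obtain ⟨p, hp⟩ := exists_nat_gt (g 0 / ((1 - m * s) * g 0 - g s))
  have hc : 0 < (1 - m * s) * g 0 - g s := by linarith
  have hp0 : 0 < p := Nat.cast_pos.1 ((div_nonneg hg00 hc.le).trans_lt hp)
  rw [div_lt_iff₀ hc] at hp
  linarith [hbound p hp0]

end WrightConcave

theorem inBox_of_le {n : ℕ} {x y : Vec n} (hx : ∀ j, 0 ≤ x j) (hxy : ∀ j, x j ≤ y j)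
    (hy : inBox y) : inBox x :=
  fun j => ⟨hx j, (hxy j).trans (hy j).2⟩

namespace DRSubmodular

variable {n : ℕ} {F : Vec n → ℝ}

theorem map_add_single_sub_le (hF : DRSubmodular F) {a b : Vec n} (ha : inBox a) (hb : inBox b)
    (hab : ∀ j, a j ≤ b j) {i : Fin n} {k : ℝ} (hk : 0 ≤ k)
    (hbk : inBox (b + EuclideanSpace.single i k)) :
    F (b + EuclideanSpace.single i k) - F b ≤ F (a + EuclideanSpace.single i k) - F a := by
  rcases hk.eq_or_lt with rfl | hk
  · simp [(PiLp.single_eq_zero_iff 2 i).2 rfl]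
  · exact hF a b ha hb hab k hk i hbk

/-- Telescoping over the coordinates of `v`. -/
theorem map_add_sub_le (hF : DRSubmodular F) {a b v : Vec n} (ha : ∀ j, 0 ≤ a j)
    (hab : ∀ j, a j ≤ b j) (hv : ∀ j, 0 ≤ v j) (hbv : inBox (b + v)) :
    F (b + v) - F b ≤ F (a + v) - F a := by
  classical
  set w : Finset (Fin n) → Vec n := fun s => ∑ i ∈ s, EuclideanSpace.single i (v i) with hw
  have hwj : ∀ s j, w s j = if j ∈ s then v j else 0 := by simp [hw]
  have hw0 : ∀ s j, 0 ≤ w s j := fun s j => by rw [hwj]; split_ifs <;> simp [hv j]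
  have hwv : ∀ s j, w s j ≤ v j := fun s j => by rw [hwj]; split_ifs <;> simp [hv j]
  have hbox : ∀ c s, (∀ j, a j ≤ c j) → (∀ j, c j ≤ b j) → inBox (c + w s) :=
    fun c s hac hcb => inBox_of_le
      (fun j => by simpa using add_nonneg ((ha j).trans (hac j)) (hw0 s j))
      (fun j => by simpa using add_le_add (hcb j) (hwv s j)) hbv
  have hwuniv : w univ = v := by ext j; simp [hwj]
  suffices ∀ s, F (b + w s) - F b ≤ F (a + w s) - F a by simpa [hwuniv] using this univ
  intro s
  induction s using Finset.induction_on with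
  | empty => simp [hw]
  | insert i s hi ih =>
    have hins : ∀ c, c + w (insert i s) = c + w s + EuclideanSpace.single i (v i) := by
      intro c
      simp only [hw]
      rw [sum_insert hi, add_comm (EuclideanSpace.single i (v i)), add_assoc]
    have := hF.map_add_single_sub_le (hbox a s (fun _ => le_rfl) hab) (hbox b s hab fun _ => le_rfl)
      (fun j => by simpa using hab j) (hv i)
      (by rw [← hins]; exact hbox b _ hab fun _ => le_rfl)
    rw [hins, hins]
    linarith

theorem wrightConcaveOn_line (hF : DRSubmodular F) {x d : Vec n} {I : Set ℝ}
    (hd : ∀ j, 0 ≤ d j) (hI : ∀ t ∈ I, inBox (x + t • d)) :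
    WrightConcaveOn (fun t => F (x + t • d)) I := by
  intro t₁ t₂ h ht₁ ht₂h h12 hh
  have hsplit : ∀ t, x + (t + h) • d = x + t • d + h • d := fun t => by
    rw [add_smul, add_assoc]
  simp only [hsplit]
  refine hF.map_add_sub_le (fun j => (hI t₁ ht₁ j).1) (fun j => ?_) (fun j => ?_)
    (by rw [← hsplit]; exact hI _ ht₂h)
  · simpa using mul_le_mul_of_nonneg_right h12 (hd j)
  · simpa using mul_nonneg hh (hd j)

end DRSubmodular

/-- Corollary 2.3 / `cor:norm_bound`: for a nonnegative DR-submodular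
function `F` on `[0,1]^n` and `x, y ∈ [0,1]^n`, `F(x ⊛ y) ≥ (1 − ‖y‖∞)·F(x)`. -/
theorem stmt_1 {n : ℕ} (F : Vec n → ℝ)
    (hF0 : ∀ x, inBox x → 0 ≤ F x)
    (hDR : DRSubmodular F)
    (x y : Vec n) (hx : inBox x) (hy : inBox y) :
    (1 - normInf y) * F x ≤ F (psum x y) := by
  set m := normInf y
  have hym : ∀ j, y j ≤ m := fun j =>
    (le_abs_self _).trans (le_ciSup (f := fun j => |y j|) (Set.finite_range _).bddAbove j)
  have hm0 : 0 ≤ m := Real.iSup_nonneg fun j => abs_nonneg _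
  have hm1 : m ≤ 1 :=
    Real.iSup_le (fun j => abs_le.2 ⟨by linarith [(hy j).1], (hy j).2⟩) zero_le_one
  set d := had (oneM x) y
  have hd : ∀ j, 0 ≤ d j := fun j => mul_nonneg (sub_nonneg.2 (hx j).2) (hy j).1
  have hbox : ∀ t ∈ {t : ℝ | 0 ≤ t ∧ m * t ≤ 1}, inBox (x + t • d) := by
    rintro t ⟨ht0, htm⟩ j
    have hxj := hx j
    have hty : t * y j ≤ 1 := by nlinarith [hym j]
    simp only [d, had, oneM, PiLp.add_apply, PiLp.smul_apply, PiLp.toLp_apply, smul_eq_mul]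
    constructor <;> nlinarith [mul_nonneg ht0 (hd j), (hy j).1]
  have key := (hDR.wrightConcaveOn_line hd hbox).one_sub_mul_le
    (fun t ht0 htm => hF0 _ (hbox t ⟨ht0, htm⟩)) hm0 zero_le_one (by simpa using hm1)
  have hpsum : x + (1 : ℝ) • d = psum x y := by
    ext j
    simp only [d, had, oneM, psum, PiLp.add_apply, PiLp.smul_apply, PiLp.toLp_apply, smul_eq_mul]
    ring
  rw [← hpsum]
  simpa using key
end
end

section
/- In the Algorithm 1 setting, for every integer 0 ≤ i ≤ 1/ε: y⁽ⁱ⁾ ∈ Q and z⁽ⁱ⁾ ∈ εi·P, where εi·P = {εi·x : x ∈ P}. Consequently, y⁽ⁱ⁾⊛z⁽ⁱ⁾ ∈ (Q + P) ∩ [0,1]^n, where Q + P = {u + v : u ∈ Q, v ∈ P}. -/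
open scoped InnerProductSpace
open Pointwise

noncomputable section

/-- The Algorithm 1 setting: `Q ⊆ [0,1]^n` convex, `P ⊆ [0,1]^n` down-closed convex,
`ε ∈ (0,1)` with `1/ε = N ∈ ℕ`, and sequences `y⁽ⁱ⁾, z⁽ⁱ⁾` built from `a⁽ⁱ⁾ ∈ Q`,
`b⁽ⁱ⁾ ∈ P` satisfying `a⁽ⁱ⁾ + b⁽ⁱ⁾ ⊙ (1 − y⁽ⁱ⁻¹⁾) ≤ 1`, via
`y⁽ⁱ⁾ = (1−ε)·y⁽ⁱ⁻¹⁾ + ε·a⁽ⁱ⁾` and `z⁽ⁱ⁾ = z⁽ⁱ⁻¹⁾ + ε·(1 − z⁽ⁱ⁻¹⁾) ⊙ b⁽ⁱ⁾`. -/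
structure Alg1Setting {n : ℕ} (Q P : Set (Vec n)) (ε : ℝ) (N : ℕ)
    (y z a b : ℕ → Vec n) : Prop where
  hQbox : ∀ x ∈ Q, inBox x
  hQconv : Convex ℝ Q
  hPbox : ∀ x ∈ P, inBox x
  hPconv : Convex ℝ P
  hPdown : downClosed P
  hε0 : 0 < ε
  hε1 : ε < 1
  hεN : (N : ℝ) * ε = 1
  hy0Q : y 0 ∈ Q
  hy0min : ∀ x ∈ Q, normInf (y 0) ≤ normInf x
  hz0 : z 0 = 0
  haQ : ∀ i, 1 ≤ i → i ≤ N → a i ∈ Q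
  hbP : ∀ i, 1 ≤ i → i ≤ N → b i ∈ P
  hfeas : ∀ i, 1 ≤ i → i ≤ N → ∀ j, a i j + b i j * (1 - y (i-1) j) ≤ 1
  hyrec : ∀ i, 1 ≤ i → i ≤ N → y i = (1-ε) • y (i-1) + ε • a i
  hzrec : ∀ i, 1 ≤ i → i ≤ N → z i = z (i-1) + ε • had (oneM (z (i-1))) (b i)

set_option maxHeartbeats 1000000 in
theorem stmt_2_aux {n : ℕ} (Q P : Set (Vec n)) (ε : ℝ) (N : ℕ) (y z a b : ℕ → Vec n)
    (H : Alg1Setting Q P ε N y z a b) :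
    ∀ i, i ≤ N → y i ∈ Q ∧ ∃ x ∈ P, z i = (ε * i) • x := by
  obtain ⟨hQbox, hQconv, hPbox, hPconv, hPdown, hε0, hε1, hεN, hy0Q, hy0min, hz0,
    haQ, hbP, hfeas, hyrec, hzrec⟩ := H
  have hNne : N ≠ 0 := by
    rintro rfl
    simp at hεN
  have hN1 : 1 ≤ N := Nat.one_le_iff_ne_zero.mpr hNne
  have hb1P : b 1 ∈ P := hbP 1 le_rfl hN1
  have h0P : (0 : Vec n) ∈ P :=
    hPdown 0 (b 1) (fun j => le_rfl) (fun j => (hPbox _ hb1P j).1) hb1P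
  intro i
  induction i with
  | zero =>
    intro _
    exact ⟨hy0Q, 0, h0P, by simp [hz0]⟩
  | succ i ih =>
    intro hiN
    obtain ⟨hyQ, x, hxP, hzx⟩ := ih (Nat.le_of_succ_le hiN)
    have hi1 : 1 ≤ i + 1 := Nat.le_add_left 1 i
    have hyr := hyrec (i+1) hi1 hiN
    have hzr := hzrec (i+1) hi1 hiN
    rw [Nat.add_sub_cancel] at hyr hzr
    have hYQ : y (i+1) ∈ Q := by
      rw [hyr]
      exact hQconv hyQ (haQ _ hi1 hiN) (by linarith) hε0.le (by ring)
    have hiR : (i : ℝ) ≤ N := Nat.cast_le.mpr (Nat.le_of_succ_le hiN)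
    have hεi : ε * i ≤ 1 := by nlinarith
    have hxbox := hPbox _ hxP
    have hbbox := hPbox _ (hbP _ hi1 hiN)
    have hzij : ∀ j, z i j = ε * i * x j := by
      intro j; rw [hzx]; rfl
    have hzb : ∀ j, 0 ≤ z i j ∧ z i j ≤ 1 := by
      intro j
      have := hxbox j
      rw [hzij j]
      constructor
      · exact mul_nonneg (by positivity) this.1
      · nlinarith
    set c : Vec n := WithLp.toLp 2 (fun j => (1 - z i j) * b (i+1) j) with hc
    have hcP : c ∈ P := by
      refine hPdown c (b (i+1)) (fun j => ?_) (fun j => ?_) (hbP _ hi1 hiN)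
      · show 0 ≤ (1 - z i j) * b (i+1) j
        exact mul_nonneg (by linarith [(hzb j).2]) (hbbox j).1
      · show (1 - z i j) * b (i+1) j ≤ b (i+1) j
        nlinarith [(hzb j).1, (hbbox j).1]
    have hip : (0:ℝ) < (i:ℝ) + 1 := by positivity
    set x' : Vec n := ((i:ℝ)/((i:ℝ)+1)) • x + ((1:ℝ)/((i:ℝ)+1)) • c with hx'
    have hx'P : x' ∈ P := by
      refine hPconv hxP hcP (by positivity) (by positivity) ?_
      field_simp
    refine ⟨hYQ, x', hx'P, ?_⟩
    have hne : (i:ℝ) + 1 ≠ 0 := by positivity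
    rw [hzr]
    ext j
    simp only [hx', hc, PiLp.add_apply, PiLp.smul_apply, smul_eq_mul, had, oneM, hzij j]
    push_cast
    field_simp


set_option maxHeartbeats 1000000 in
/-- Lemma 4.2 / `lem:membership`: in the Algorithm 1 setting, for every
`0 ≤ i ≤ 1/ε`, `y⁽ⁱ⁾ ∈ Q` and `z⁽ⁱ⁾ ∈ εi·P`; consequently
`y⁽ⁱ⁾ ⊛ z⁽ⁱ⁾ ∈ (Q + P) ∩ [0,1]^n`. -/
theorem stmt_2 {n : ℕ} (Q P : Set (Vec n)) (ε : ℝ) (N : ℕ) (y z a b : ℕ → Vec n)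
    (H : Alg1Setting Q P ε N y z a b) :
    ∀ i ≤ N, y i ∈ Q ∧ (∃ x ∈ P, z i = (ε * i) • x) ∧
      psum (y i) (z i) ∈ (Q + P) ∩ {x : Vec n | inBox x} := by
  obtain ⟨hQbox, hQconv, hPbox, hPconv, hPdown, hε0, hε1, hεN, hy0Q, hy0min, hz0,
    haQ, hbP, hfeas, hyrec, hzrec⟩ := id H
  have key := stmt_2_aux Q P ε N y z a b H
  intro i hiN
  obtain ⟨hyQ, x, hxP, hzx⟩ := key i hiN
  have hiR : (i : ℝ) ≤ N := Nat.cast_le.mpr hiN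
  have hεi : ε * i ≤ 1 := by nlinarith
  have hxbox := hPbox _ hxP
  have hybox := hQbox _ hyQ
  have hzij : ∀ j, z i j = ε * i * x j := by
    intro j; rw [hzx]; rfl
  have hzb : ∀ j, 0 ≤ z i j ∧ z i j ≤ 1 := by
    intro j
    have := hxbox j
    rw [hzij j]
    constructor
    · exact mul_nonneg (by positivity) this.1
    · nlinarith
  refine ⟨hyQ, ⟨x, hxP, hzx⟩, ?_, ?_⟩
  · set v : Vec n := WithLp.toLp 2 (fun j => z i j * (1 - y i j)) with hv
    have hvP : v ∈ P := by
      refine hPdown v x (fun j => ?_) (fun j => ?_) hxP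
      · show 0 ≤ z i j * (1 - y i j)
        exact mul_nonneg (hzb j).1 (by linarith [(hybox j).2])
      · show z i j * (1 - y i j) ≤ x j
        have hx0 := (hxbox j).1
        have := hzij j
        nlinarith [(hybox j).1, (hzb j).1]
    have : psum (y i) (z i) = y i + v := by
      ext j
      simp only [psum, hv, PiLp.add_apply]
      ring
    rw [this]
    exact Set.add_mem_add hyQ hvP
  · intro j
    have h1 := hybox j
    have h2 := hzb j
    have hp : psum (y i) (z i) j = y i j + z i j - y i j * z i j := rfl
    rw [hp]
    constructor <;> nlinarith
end
end

section
/- In the Algorithm 1 setting, for every integer 0 ≤ i ≤ 1/ε: ‖z⁽ⁱ⁾‖∞ ≤ 1 − (1−ε)^i and ‖y⁽ⁱ⁾‖∞ ≤ ‖y⁽ⁱ⁾⊛z⁽ⁱ⁾‖∞ ≤ 1 − (1−ε)^i·(1−m). -/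
open scoped InnerProductSpace
open Pointwise

noncomputable section

/-!
Coordinatewise, `1 - (y ⊛ z) = (1 - y)(1 - z)`. One step multiplies `1 - z` by `1 - ε b ≥ 1 - ε`
and, by the feasibility constraint `a ≤ 1 - b (1 - y)`, multiplies `1 - y` by at least
`1 - ε + ε b`. Since `(1 - ε + ε b)(1 - ε b) = 1 - ε + ε² b (1 - b) ≥ 1 - ε`, the product
`(1 - y)(1 - z)` shrinks by a factor of at most `1 - ε` per step, starting from `1 - y⁽⁰⁾ ≥ 1 - m`.
-/

open Set

section NormInf

variable {n : ℕ}

lemma abs_apply_le_normInf (x : Vec n) (j : Fin n) : |x j| ≤ normInf x :=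
  le_ciSup (f := fun j => |x j|) (Set.finite_range _).bddAbove j

lemma normInf_nonneg (x : Vec n) : 0 ≤ normInf x :=
  Real.iSup_nonneg fun _ => abs_nonneg _

lemma normInf_le {x : Vec n} {c : ℝ} (hc : 0 ≤ c) (h : ∀ j, |x j| ≤ c) : normInf x ≤ c :=
  Real.iSup_le h hc

lemma normInf_mono {x x' : Vec n} (h : ∀ j, |x j| ≤ |x' j|) : normInf x ≤ normInf x' :=
  normInf_le (normInf_nonneg x') fun j => (h j).trans (abs_apply_le_normInf x' j)

lemma psum_apply (x y : Vec n) (j : Fin n) : psum x y j = 1 - (1 - x j) * (1 - y j) := by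
  simp only [psum]
  ring

end NormInf

section Step

variable {ε y z a b : ℝ}

lemma le_prob_step (hε : 0 ≤ ε) (hz : z ≤ 1) (hb : 0 ≤ b) : z ≤ z + ε * ((1 - z) * b) :=
  le_add_of_nonneg_right (mul_nonneg hε (mul_nonneg (sub_nonneg.mpr hz) hb))

lemma one_sub_prob_step_eq : 1 - (z + ε * ((1 - z) * b)) = (1 - z) * (1 - ε * b) := by
  ring

lemma mul_one_sub_le_one_sub_prob_step (hε : 0 ≤ ε) (hz : z ≤ 1) (hb : b ≤ 1) :
    (1 - z) * (1 - ε) ≤ 1 - (z + ε * ((1 - z) * b)) := by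
  rw [one_sub_prob_step_eq]
  exact mul_le_mul_of_nonneg_left (sub_le_sub_left (mul_le_of_le_one_right hε hb) 1)
    (sub_nonneg.mpr hz)

lemma one_sub_le_mul_one_sub (hb0 : 0 ≤ b) (hb1 : b ≤ 1) :
    1 - ε ≤ (1 - ε + ε * b) * (1 - ε * b) := by
  rw [show (1 - ε + ε * b) * (1 - ε * b) = 1 - ε + ε ^ 2 * (b * (1 - b)) by ring]
  exact le_add_of_nonneg_right (mul_nonneg (sq_nonneg ε) (mul_nonneg hb0 (sub_nonneg.mpr hb1)))

lemma mul_one_sub_mul_le_step (hε0 : 0 ≤ ε) (hε1 : ε ≤ 1) (hy : y ≤ 1) (hz : z ≤ 1)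
    (hb0 : 0 ≤ b) (hb1 : b ≤ 1) (hfeas : a + b * (1 - y) ≤ 1) :
    (1 - y) * (1 - z) * (1 - ε) ≤
      (1 - ((1 - ε) * y + ε * a)) * (1 - (z + ε * ((1 - z) * b))) := by
  have hy' : (1 - y) * (1 - ε + ε * b) ≤ 1 - ((1 - ε) * y + ε * a) := by
    linarith [mul_nonneg hε0 (sub_nonneg.mpr hfeas)]
  have hz' : 0 ≤ (1 - z) * (1 - ε * b) :=
    mul_nonneg (sub_nonneg.mpr hz) (sub_nonneg.mpr (mul_le_one₀ hε1 hb0 hb1))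
  calc (1 - y) * (1 - z) * (1 - ε)
      ≤ ((1 - y) * (1 - z)) * ((1 - ε + ε * b) * (1 - ε * b)) :=
        mul_le_mul_of_nonneg_left (one_sub_le_mul_one_sub hb0 hb1)
          (mul_nonneg (sub_nonneg.mpr hy) (sub_nonneg.mpr hz))
    _ = ((1 - y) * (1 - ε + ε * b)) * ((1 - z) * (1 - ε * b)) := by ring
    _ ≤ (1 - ((1 - ε) * y + ε * a)) * ((1 - z) * (1 - ε * b)) :=
        mul_le_mul_of_nonneg_right hy' hz'
    _ = _ := by rw [one_sub_prob_step_eq]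

end Step

namespace Alg1Setting

variable {n : ℕ} {Q P : Set (Vec n)} {ε : ℝ} {N : ℕ} {y z a b : ℕ → Vec n}

lemma y_succ_apply (H : Alg1Setting Q P ε N y z a b) {i : ℕ} (hi : i + 1 ≤ N) (j : Fin n) :
    y (i + 1) j = (1 - ε) * y i j + ε * a (i + 1) j := by
  simp [H.hyrec (i + 1) (by omega) hi]

lemma z_succ_apply (H : Alg1Setting Q P ε N y z a b) {i : ℕ} (hi : i + 1 ≤ N) (j : Fin n) :
    z (i + 1) j = z i j + ε * ((1 - z i j) * b (i + 1) j) := by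
  simp [H.hzrec (i + 1) (by omega) hi, had, oneM]

lemma a_mem_Icc (H : Alg1Setting Q P ε N y z a b) {i : ℕ} (hi : i + 1 ≤ N) (j : Fin n) :
    a (i + 1) j ∈ Icc 0 1 :=
  H.hQbox _ (H.haQ (i + 1) (by omega) hi) j

lemma b_mem_Icc (H : Alg1Setting Q P ε N y z a b) {i : ℕ} (hi : i + 1 ≤ N) (j : Fin n) :
    b (i + 1) j ∈ Icc 0 1 :=
  H.hPbox _ (H.hbP (i + 1) (by omega) hi) j

lemma y_mem_Icc (H : Alg1Setting Q P ε N y z a b) {i : ℕ} (hi : i ≤ N) (j : Fin n) :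
    y i j ∈ Icc 0 1 := by
  induction i with
  | zero => exact H.hQbox _ H.hy0Q j
  | succ i ih =>
    rw [H.y_succ_apply hi]
    exact convex_Icc 0 1 (ih (by omega)) (H.a_mem_Icc hi j) (by linarith [H.hε1]) H.hε0.le
      (by ring)

lemma z_bounds (H : Alg1Setting Q P ε N y z a b) {i : ℕ} (hi : i ≤ N) (j : Fin n) :
    0 ≤ z i j ∧ (1 - ε) ^ i ≤ 1 - z i j := by
  induction i with
  | zero => simp [H.hz0]
  | succ i ih =>
    obtain ⟨hz0, hz1⟩ := ih (by omega)
    have hz : z i j ≤ 1 := by linarith [pow_nonneg (sub_nonneg.mpr H.hε1.le) i]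
    obtain ⟨hb0, hb1⟩ := H.b_mem_Icc hi j
    rw [H.z_succ_apply hi, pow_succ]
    exact ⟨hz0.trans (le_prob_step H.hε0.le hz hb0),
      (mul_le_mul_of_nonneg_right hz1 (sub_nonneg.mpr H.hε1.le)).trans
        (mul_one_sub_le_one_sub_prob_step H.hε0.le hz hb1)⟩

lemma pow_mul_le_one_sub_mul_one_sub (H : Alg1Setting Q P ε N y z a b) {i : ℕ} (hi : i ≤ N)
    (j : Fin n) : (1 - ε) ^ i * (1 - normInf (y 0)) ≤ (1 - y i j) * (1 - z i j) := by
  induction i with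
  | zero =>
    have hy0 := (le_abs_self _).trans (abs_apply_le_normInf (y 0) j)
    simp only [pow_zero, one_mul, H.hz0, WithLp.ofLp_zero, Pi.zero_apply, sub_zero, mul_one]
    linarith
  | succ i ih =>
    have hz : z i j ≤ 1 := by
      linarith [(H.z_bounds (i := i) (by omega) j).2, pow_nonneg (sub_nonneg.mpr H.hε1.le) i]
    obtain ⟨hb0, hb1⟩ := H.b_mem_Icc hi j
    have hfeas := H.hfeas (i + 1) (by omega) hi j
    rw [Nat.add_sub_cancel] at hfeas
    rw [H.y_succ_apply hi, H.z_succ_apply hi, pow_succ, mul_right_comm]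
    exact (mul_le_mul_of_nonneg_right (ih (by omega)) (sub_nonneg.mpr H.hε1.le)).trans
      (mul_one_sub_mul_le_step H.hε0.le H.hε1.le (H.y_mem_Icc (by omega) j).2 hz hb0 hb1 hfeas)

end Alg1Setting

/-- Lemma 4.3 / `lem:normxy`: in the Algorithm 1 setting
(with `m = ‖y⁽⁰⁾‖∞`), for every `0 ≤ i ≤ 1/ε`, `‖z⁽ⁱ⁾‖∞ ≤ 1 − (1−ε)^i` and
`‖y⁽ⁱ⁾‖∞ ≤ ‖y⁽ⁱ⁾ ⊛ z⁽ⁱ⁾‖∞ ≤ 1 − (1−ε)^i·(1−m)`. -/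
theorem stmt_3 {n : ℕ} (Q P : Set (Vec n)) (ε : ℝ) (N : ℕ) (y z a b : ℕ → Vec n)
    (H : Alg1Setting Q P ε N y z a b)
    (m : ℝ) (hm : m = normInf (y 0)) :
    ∀ i ≤ N, normInf (z i) ≤ 1 - (1 - ε)^i ∧
      normInf (y i) ≤ normInf (psum (y i) (z i)) ∧
      normInf (psum (y i) (z i)) ≤ 1 - (1 - ε)^i * (1 - m) := by
  intro i hi
  have hpow0 : 0 ≤ (1 - ε) ^ i := pow_nonneg (sub_nonneg.mpr H.hε1.le) i
  have hpow1 : (1 - ε) ^ i ≤ 1 := pow_le_one₀ (sub_nonneg.mpr H.hε1.le) (sub_le_self 1 H.hε0.le)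
  have hm0 : 0 ≤ m := hm ▸ normInf_nonneg (y 0)
  have hy := H.y_mem_Icc hi
  have hz := H.z_bounds hi
  have hprod := hm ▸ H.pow_mul_le_one_sub_mul_one_sub hi
  have hz1 : ∀ j, z i j ≤ 1 := fun j => by linarith [(hz j).2]
  have hpsum0 : ∀ j, 0 ≤ psum (y i) (z i) j := fun j => by
    rw [psum_apply, sub_nonneg]
    exact mul_le_one₀ (by linarith [(hy j).1]) (sub_nonneg.mpr (hz1 j)) (by linarith [(hz j).1])
  have hbound : (1 - ε) ^ i * (1 - m) ≤ 1 :=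
    (mul_le_of_le_one_right hpow0 (sub_le_self 1 hm0)).trans hpow1
  refine ⟨normInf_le (by linarith) fun j => ?_, normInf_mono fun j => ?_,
    normInf_le (by linarith) fun j => ?_⟩
  · rw [abs_of_nonneg (hz j).1]
    linarith [(hz j).2]
  · rw [abs_of_nonneg (hy j).1, abs_of_nonneg (hpsum0 j), psum_apply]
    nlinarith [mul_nonneg (sub_nonneg.mpr (hy j).2) (hz j).1]
  · rw [abs_of_nonneg (hpsum0 j), psum_apply]
    linarith [hprod j]
end
end

section
/- In the Algorithm 1 setting, let F: [0,1]^n → [0,∞) be a nonnegative β-smooth DR-submodular function, let D be the ℓ₂-diameter of (Q + P) ∩ [0,1]^n, assume m < 1, and let p* ∈ P. Suppose that for every integer 1 ≤ i' ≤ 1/ε one has ⟨b⁽ⁱ'⁾⊙(1 − z⁽ⁱ'⁻¹⁾), ∇F(z⁽ⁱ'⁻¹⁾)⟩ ≥ (1−ε)^{i'−1}·F(p*) − F(z⁽ⁱ'⁻¹⁾). Then for every integer 0 ≤ i ≤ 1/ε: F(z⁽ⁱ⁾) ≥ εi·(1−ε)^{i−1}·F(p*) − i·ε²βD²/(2(1−m)²).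 -/
open scoped InnerProductSpace
open Pointwise

noncomputable section

/-!
Along the segment from `x` to `y`, the function
`t ↦ f (x + t • (y - x)) - t ⟪f' x, y - x⟫ + β t² ‖y - x‖² / 2` has nonnegative derivative, by
Cauchy–Schwarz and the Lipschitz bound on `f'`; comparing its values at `0` and `1` gives the
quadratic lower bound of a smooth function. Applied to one step `z⁽ᵏ⁾ → z⁽ᵏ⁺¹⁾` of the
algorithm, together with the assumed lower bound on the directional derivative, it gives
`F(z⁽ᵏ⁺¹⁾) ≥ (1-ε) F(z⁽ᵏ⁾) + ε (1-ε)ᵏ F(p) - β ‖z⁽ᵏ⁺¹⁾ - z⁽ᵏ⁾‖² / 2`. The step length is at most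
`ε ‖b⁽ᵏ⁺¹⁾‖`, and `‖b⁽ᵏ⁺¹⁾‖ ≤ D / (1 - m)` because `y⁽⁰⁾` and `y⁽⁰⁾ + (1 - m) b⁽ᵏ⁺¹⁾` both lie in
`(Q + P) ∩ [0,1]ⁿ`. Unrolling the resulting linear recursion gives the bound.
-/

theorem Convex.apply_add_inner_sub_le_of_lipschitzOn_gradient
    {E : Type*} [NormedAddCommGroup E] [InnerProductSpace ℝ E] [CompleteSpace E]
    {s : Set E} (hs : Convex ℝ s) {f : E → ℝ} {f' : E → E} {β : ℝ}
    (hf : ∀ x ∈ s, HasGradientAt f (f' x) x)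
    (hf' : ∀ x ∈ s, ∀ y ∈ s, ‖f' x - f' y‖ ≤ β * ‖x - y‖)
    {x y : E} (hx : x ∈ s) (hy : y ∈ s) :
    f x + ⟪f' x, y - x⟫_ℝ - β / 2 * ‖y - x‖ ^ 2 ≤ f y := by
  set w := y - x
  have hseg : ∀ t ∈ Set.Icc (0 : ℝ) 1, x + t • w ∈ s := fun t ht => hs.add_smul_sub_mem hx hy ht
  set φ : ℝ → ℝ := fun t => f (x + t • w) - t * ⟪f' x, w⟫_ℝ + β / 2 * t ^ 2 * ‖w‖ ^ 2
  have hφ : ∀ t ∈ Set.Icc (0 : ℝ) 1, HasDerivAt φ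
      (⟪f' (x + t • w) - f' x, w⟫_ℝ + β * t * ‖w‖ ^ 2) t := by
    intro t ht
    have hline : HasDerivAt (fun t : ℝ => x + t • w) w t := by
      simpa using ((hasDerivAt_id t).smul_const w).const_add x
    have hcomp := (hf _ (hseg t ht)).hasFDerivAt.comp_hasDerivAt t hline
    refine ((hcomp.sub ((hasDerivAt_id t).mul_const ⟪f' x, w⟫_ℝ)).add
      (((hasDerivAt_pow 2 t).const_mul (β / 2)).mul_const (‖w‖ ^ 2))).congr_deriv ?_
    simp only [InnerProductSpace.toDual_apply_apply, inner_sub_left]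
    ring
  have hφ_nonneg : ∀ t ∈ Set.Icc (0 : ℝ) 1,
      0 ≤ ⟪f' (x + t • w) - f' x, w⟫_ℝ + β * t * ‖w‖ ^ 2 := by
    intro t ht
    have hL : ‖f' (x + t • w) - f' x‖ ≤ β * (t * ‖w‖) := by
      simpa [norm_smul, abs_of_nonneg ht.1] using hf' _ (hseg t ht) x hx
    have := neg_le_of_abs_le ((abs_real_inner_le_norm _ _).trans
      (mul_le_mul_of_nonneg_right hL (norm_nonneg w)))
    linarith
  have hmono : MonotoneOn φ (Set.Icc 0 1) :=
    monotoneOn_of_hasDerivWithinAt_nonneg (convex_Icc 0 1)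
      (fun t ht => (hφ t ht).continuousAt.continuousWithinAt)
      (fun t ht => (hφ t (interior_subset ht)).hasDerivWithinAt)
      (fun t ht => hφ_nonneg t (interior_subset ht))
  have := hmono (Set.left_mem_Icc.2 zero_le_one) (Set.right_mem_Icc.2 zero_le_one) zero_le_one
  simp only [φ, w, zero_smul, add_zero, zero_mul, sub_zero, one_smul, add_sub_cancel,
    one_mul, mul_one, one_pow] at this
  linarith

theorem le_of_damped_recursion {u : ℕ → ℝ} {ε c δ : ℝ} {N : ℕ} (hε0 : 0 ≤ ε) (hε1 : ε ≤ 1)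
    (hδ : 0 ≤ δ) (hu0 : 0 ≤ u 0)
    (hstep : ∀ k, k + 1 ≤ N → (1 - ε) * u k + ε * ((1 - ε) ^ k * c) - δ ≤ u (k + 1)) :
    ∀ i ≤ N, ε * i * (1 - ε) ^ (i - 1) * c - i * δ ≤ u i := by
  intro i
  induction i with
  | zero => simpa using hu0
  | succ k ih =>
    intro hk
    have hpow : (1 - ε) * (k * (1 - ε) ^ (k - 1)) = k * (1 - ε) ^ k := by
      cases k with
      | zero => simp
      | succ k => simp only [Nat.add_sub_cancel, pow_succ]; ring
    have hrec := mul_le_mul_of_nonneg_left (ih (by omega)) (sub_nonneg.2 hε1)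
    rw [show (1 - ε) * (ε * k * (1 - ε) ^ (k - 1) * c - k * δ)
        = ε * k * (1 - ε) ^ k * c - (1 - ε) * (k * δ) by linear_combination (ε * c) * hpow] at hrec
    have hdamp : (1 - ε) * (k * δ) ≤ k * δ :=
      mul_le_of_le_one_left (by positivity) (by linarith)
    have := hstep k hk
    simp only [Nat.add_sub_cancel, Nat.cast_succ]
    linarith

section Box

variable {n : ℕ}

theorem convex_setOf_inBox : Convex ℝ {x : Vec n | inBox x} := by
  intro x hx y hy s t hs ht hst j
  have hxj := hx j
  have hyj := hy j
  simp only [PiLp.add_apply, PiLp.smul_apply, smul_eq_mul]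
  constructor <;> nlinarith

theorem isBounded_setOf_inBox : Bornology.IsBounded {x : Vec n | inBox x} := by
  refine (Metric.isBounded_closedBall (x := (0 : Vec n)) (r := √n)).subset fun x hx => ?_
  rw [Metric.mem_closedBall, dist_zero_right, EuclideanSpace.norm_eq]
  have hsq : ∀ j, ‖x j‖ ^ 2 ≤ 1 := fun j => by
    rw [Real.norm_eq_abs, sq_abs]
    exact pow_le_one₀ (hx j).1 (hx j).2
  exact Real.sqrt_le_sqrt ((Finset.sum_le_sum fun j _ => hsq j).trans_eq (by simp))

theorem le_normInf (x : Vec n) (j : Fin n) : x j ≤ normInf x :=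
  (le_abs_self _).trans (le_ciSup (f := fun j => |x j|) (Set.finite_range _).bddAbove j)

theorem normInf_le_one {x : Vec n} (hx : inBox x) : normInf x ≤ 1 :=
  Real.iSup_le (fun j => abs_le.2 ⟨by linarith [(hx j).1], (hx j).2⟩) zero_le_one

theorem norm_had_oneM_le {x : Vec n} (hx : inBox x) (v : Vec n) : ‖had (oneM x) v‖ ≤ ‖v‖ := by
  rw [EuclideanSpace.norm_eq, EuclideanSpace.norm_eq]
  refine Real.sqrt_le_sqrt (Finset.sum_le_sum fun j _ => ?_)
  simp only [had, oneM, PiLp.toLp_apply, norm_mul, mul_pow]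
  refine mul_le_of_le_one_left (by positivity) (pow_le_one₀ (norm_nonneg _) ?_)
  rw [Real.norm_eq_abs, abs_le]
  constructor <;> linarith [(hx j).1, (hx j).2]

theorem had_comm (x y : Vec n) : had x y = had y x := by
  ext j
  exact mul_comm _ _

theorem downClosed.zero_mem {P : Set (Vec n)} (hP : downClosed P) {p : Vec n} (hp : p ∈ P)
    (hp0 : ∀ j, 0 ≤ p j) : 0 ∈ P :=
  hP 0 p (fun _ => le_rfl) hp0 hp

end Box

namespace Alg1Setting

variable {n : ℕ} {Q P : Set (Vec n)} {ε : ℝ} {N : ℕ} {y z a b : ℕ → Vec n}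

theorem z_succ (H : Alg1Setting Q P ε N y z a b) {k : ℕ} (hk : k + 1 ≤ N) :
    z (k + 1) = z k + ε • had (oneM (z k)) (b (k + 1)) := by
  simpa using H.hzrec (k + 1) (by omega) hk

theorem inBox_z (H : Alg1Setting Q P ε N y z a b) : ∀ i ≤ N, inBox (z i) := by
  intro i
  induction i with
  | zero => intro _ j; simp [H.hz0]
  | succ k ih =>
    intro hk j
    have hz := ih (by omega) j
    have hb := H.hPbox _ (H.hbP (k + 1) (by omega) hk) j
    have hε0 := H.hε0
    have hε1 := H.hε1
    rw [H.z_succ hk]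
    simp only [had, oneM, PiLp.add_apply, PiLp.smul_apply, PiLp.toLp_apply, smul_eq_mul]
    constructor <;> nlinarith [mul_nonneg (sub_nonneg.2 hz.2) hb.1,
      mul_le_of_le_one_right (sub_nonneg.2 hz.2) hb.2]

theorem one_sub_normInf_mul_norm_b_le (H : Alg1Setting Q P ε N y z a b) {i : ℕ} (hi : 1 ≤ i)
    (hiN : i ≤ N) :
    (1 - normInf (y 0)) * ‖b i‖ ≤ Metric.diam ((Q + P) ∩ {x : Vec n | inBox x}) := by
  set m := normInf (y 0)
  have hbP := H.hbP i hi hiN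
  have hb := H.hPbox _ hbP
  have hy0 := H.hQbox _ H.hy0Q
  have h0P : (0 : Vec n) ∈ P := H.hPdown.zero_mem hbP fun j => (hb j).1
  have hm0 : 0 ≤ m := Real.iSup_nonneg fun j => abs_nonneg _
  have hm1 : 0 ≤ 1 - m := sub_nonneg.2 (normInf_le_one hy0)
  have hmem₀ : y 0 ∈ (Q + P) ∩ {x : Vec n | inBox x} :=
    ⟨by simpa using Set.add_mem_add H.hy0Q h0P, hy0⟩
  have hmem₁ : y 0 + (1 - m) • b i ∈ (Q + P) ∩ {x : Vec n | inBox x} := by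
    refine ⟨Set.add_mem_add H.hy0Q ?_, fun j => ?_⟩
    · simpa using H.hPconv hbP h0P hm1 hm0 (by ring)
    · have := le_normInf (y 0) j
      simp only [PiLp.add_apply, PiLp.smul_apply, smul_eq_mul]
      constructor <;> nlinarith [(hb j).1, (hb j).2, (hy0 j).1]
  have := Metric.dist_le_diam_of_mem (isBounded_setOf_inBox.subset Set.inter_subset_right)
    hmem₁ hmem₀
  rwa [dist_eq_norm, add_sub_cancel_left, norm_smul, Real.norm_of_nonneg hm1] at this

theorem norm_z_succ_sub_le (H : Alg1Setting Q P ε N y z a b) {k : ℕ} (hk : k + 1 ≤ N)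
    (hm : normInf (y 0) < 1) :
    ‖z (k + 1) - z k‖ ≤
      ε * Metric.diam ((Q + P) ∩ {x : Vec n | inBox x}) / (1 - normInf (y 0)) := by
  rw [H.z_succ hk, add_sub_cancel_left, norm_smul, Real.norm_of_nonneg H.hε0.le, mul_div_assoc]
  refine mul_le_mul_of_nonneg_left ?_ H.hε0.le
  rw [le_div_iff₀ (sub_pos.2 hm), mul_comm]
  exact (mul_le_mul_of_nonneg_left (norm_had_oneM_le (H.inBox_z k (by omega)) _)
    (sub_pos.2 hm).le).trans (H.one_sub_normInf_mul_norm_b_le (by omega) hk)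

theorem le_apply_z_succ (H : Alg1Setting Q P ε N y z a b) {F : Vec n → ℝ} {G : Vec n → Vec n}
    {β c r : ℝ} (hGrad : ∀ x, inBox x → HasGradientAt F (G x) x)
    (hsmooth : ∀ u v : Vec n, inBox u → inBox v → ‖G u - G v‖ ≤ β * ‖u - v‖) (hβ : 0 ≤ β)
    {k : ℕ} (hk : k + 1 ≤ N) (hr : ‖z (k + 1) - z k‖ ≤ r)
    (hdir : c - F (z k) ≤ ⟪had (b (k + 1)) (oneM (z k)), G (z k)⟫_ℝ) :
    (1 - ε) * F (z k) + ε * c - β / 2 * r ^ 2 ≤ F (z (k + 1)) := by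
  have hquad := convex_setOf_inBox.apply_add_inner_sub_le_of_lipschitzOn_gradient hGrad
    (fun u hu v hv => hsmooth u v hu hv)
    (H.inBox_z k (by omega)) (H.inBox_z (k + 1) hk)
  have hstep : ⟪G (z k), z (k + 1) - z k⟫_ℝ = ε * ⟪had (b (k + 1)) (oneM (z k)), G (z k)⟫_ℝ := by
    rw [H.z_succ hk, add_sub_cancel_left, real_inner_smul_right, real_inner_comm, had_comm]
  have hdist := mul_le_mul_of_nonneg_left (pow_le_pow_left₀ (norm_nonneg _) hr 2)
    (by positivity : 0 ≤ β / 2)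
  have := mul_le_mul_of_nonneg_left hdir H.hε0.le
  linarith

end Alg1Setting

theorem stmt_6_general {n : ℕ} (Q P : Set (Vec n)) (ε : ℝ) (N : ℕ) (y z a b : ℕ → Vec n)
    (H : Alg1Setting Q P ε N y z a b)
    (F : Vec n → ℝ) (G : Vec n → Vec n) (β : ℝ)
    (hF0 : ∀ x, inBox x → 0 ≤ F x)
    (hGrad : ∀ x, inBox x → HasGradientAt F (G x) x)
    (hβ : 0 < β)
    (hsmooth : ∀ u v : Vec n, inBox u → inBox v → ‖G u - G v‖ ≤ β * ‖u - v‖)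
    (m : ℝ) (hm : m = normInf (y 0)) (hm1 : m < 1)
    (D : ℝ) (hD : D = Metric.diam ((Q + P) ∩ {x : Vec n | inBox x}))
    (p : Vec n)
    (hlb : ∀ i, 1 ≤ i → i ≤ N →
      (1 - ε)^(i-1) * F p - F (z (i-1)) ≤
        ⟪had (b i) (oneM (z (i-1))), G (z (i-1))⟫_ℝ) :
    ∀ i ≤ N,
      ε * i * (1 - ε)^(i-1) * F p - i * ε^2 * β * D^2 / (2 * (1 - m)^2) ≤ F (z i) := by
  have hlen : ∀ k, k + 1 ≤ N → ‖z (k + 1) - z k‖ ≤ ε * D / (1 - m) := by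
    subst hm hD
    exact fun k hk => H.norm_z_succ_sub_le hk hm1
  have hδ : 0 ≤ β / 2 * (ε * D / (1 - m)) ^ 2 := by positivity
  intro i hi
  convert le_of_damped_recursion (u := fun k => F (z k)) H.hε0.le H.hε1.le hδ
    (hF0 _ (H.inBox_z 0 (Nat.zero_le N)))
    (fun k hk => H.le_apply_z_succ hGrad hsmooth hβ.le hk (hlen k hk)
      (by simpa only [Nat.add_sub_cancel] using hlb (k + 1) (by omega) hk)) i hi using 2
  have : 1 - m ≠ 0 := by linarith
  field_simp

/-- Lemma 4.6 / `lem:z_value`: in the Algorithm 1 setting, with `F`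
nonnegative β-smooth DR-submodular (gradient `G`), `D` the ℓ₂-diameter of
`(Q + P) ∩ [0,1]^n`, `m = ‖y⁽⁰⁾‖∞ < 1` and `p* ∈ P`, if for every `1 ≤ i' ≤ 1/ε` one has
`⟪b⁽ⁱ'⁾ ⊙ (1 − z⁽ⁱ'⁻¹⁾), ∇F(z⁽ⁱ'⁻¹⁾)⟫ ≥ (1−ε)^{i'−1}·F(p*) − F(z⁽ⁱ'⁻¹⁾)`, then for every
`0 ≤ i ≤ 1/ε`: `F(z⁽ⁱ⁾) ≥ εi·(1−ε)^{i−1}·F(p*) − i·ε²βD²/(2(1−m)²)`. -/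
theorem stmt_6 {n : ℕ} (Q P : Set (Vec n)) (ε : ℝ) (N : ℕ) (y z a b : ℕ → Vec n)
    (H : Alg1Setting Q P ε N y z a b)
    (F : Vec n → ℝ) (G : Vec n → Vec n) (β : ℝ)
    (hF0 : ∀ x, inBox x → 0 ≤ F x)
    (hDR : DRSubmodular F)
    (hGrad : ∀ x, inBox x → HasGradientAt F (G x) x)
    (hGcont : ContinuousOn G {x : Vec n | inBox x})
    (hβ : 0 < β)
    (hsmooth : ∀ u v : Vec n, inBox u → inBox v → ‖G u - G v‖ ≤ β * ‖u - v‖)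
    (m : ℝ) (hm : m = normInf (y 0)) (hm1 : m < 1)
    (D : ℝ) (hD : D = Metric.diam ((Q + P) ∩ {x : Vec n | inBox x}))
    (p : Vec n) (hp : p ∈ P)
    (hlb : ∀ i, 1 ≤ i → i ≤ N →
      (1 - ε)^(i-1) * F p - F (z (i-1)) ≤
        ⟪had (b i) (oneM (z (i-1))), G (z (i-1))⟫_ℝ) :
    ∀ i ≤ N,
      ε * i * (1 - ε)^(i-1) * F p - i * ε^2 * β * D^2 / (2 * (1 - m)^2) ≤ F (z i) :=
  stmt_6_general Q P ε N y z a b H F G β hF0 hGrad hβ hsmooth m hm hm1 D hD p hlb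
end
end

section
/- Let A, B, E ≥ 0, α ∈ [0,1], C > 0, and ε ∈ (0,1) with 1/ε ∈ ℕ, and define g(t) = (e^{−t} − e^{−2t})·A + (t²·e^{−2t}/2)·B for t ∈ [0,1]. There exists a constant C' > 0 depending only on C such that: if nonnegative real numbers v₀, v₁, …, v_{1/ε} satisfy, for every integer 1 ≤ i ≤ 1/ε, v_i − v_{i−1} ≥ εα·[(1−ε)^i·A + ε(1−ε)^{2i−2}(i−1)·B] − 2ε·v_{i−1} − 3ε²·v_{i−1} − Cε²·E, then for every integer 0 ≤ i ≤ 1/ε: v_i ≥ α·g(εi) − 3ε²·Σ_{i'=1}^{i} v_{i'−1} − i·C'ε²·(αA + αB + E). -/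
/-!
The recursion is a forward Euler scheme, with step `ε` and an `O(ε²)`-perturbed forcing, for
`v' = -2v + α (e^{-t} A + t e^{-2t} B)`, whose solution with `v(0) = 0` is `α g(t)`.
Since `(1 - ε)^n ≥ e^{-εn} - nε²`, the discrete forcing matches `e^{-t}` and `t e^{-2t}` up to
`O(ε²)`, and `g` satisfies the Euler scheme with a local error `O(ε²)`. Because the scheme
multiplies the previous error by `1 - 2ε ≤ 1`, the local errors add up to at most
`i · C' ε² (αA + αB + E)` after `i` steps, while the `-3ε² v` terms are carried along as a sum.
-/

open Real Finset

theorem exp_neg_mul_sub_le_one_sub_pow {ε : ℝ} (h0 : 0 ≤ ε) (h1 : ε ≤ 1) (n : ℕ) :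
    exp (-(ε * n)) - n * ε ^ 2 ≤ (1 - ε) ^ n := by
  have hbase : exp (-ε) * (1 - ε ^ 2) ≤ 1 - ε := by
    have hinv : exp (-ε) * (1 + ε) ≤ 1 := by
      have := mul_le_mul_of_nonneg_left (add_one_le_exp ε) (exp_pos (-ε)).le
      rw [← exp_add, neg_add_cancel, exp_zero] at this
      linarith
    nlinarith
  have hbern : 1 - n * ε ^ 2 ≤ (1 - ε ^ 2) ^ n := by
    simpa [sub_eq_add_neg] using one_add_mul_le_pow (a := -ε ^ 2) (by nlinarith) n
  have hpow : exp (-(ε * n)) = exp (-ε) ^ n := by rw [← exp_nat_mul]; ring_nf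
  have hle : exp (-(ε * n)) ≤ 1 := exp_le_one_iff.mpr (by simp; positivity)
  calc exp (-(ε * n)) - n * ε ^ 2 ≤ exp (-(ε * n)) * (1 - n * ε ^ 2) := by
        nlinarith [mul_le_mul_of_nonneg_right hle (by positivity : (0 : ℝ) ≤ n * ε ^ 2)]
    _ ≤ exp (-(ε * n)) * (1 - ε ^ 2) ^ n := by gcongr
    _ = (exp (-ε) * (1 - ε ^ 2)) ^ n := by rw [mul_pow, hpow]
    _ ≤ (1 - ε) ^ n := pow_le_pow_left₀ (mul_nonneg (exp_pos _).le (by nlinarith)) hbase n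

private lemma exp_neg_two_mul (s : ℝ) : exp (-(2 * s)) = exp (-s) ^ 2 := by
  rw [sq, ← exp_add]; ring_nf

theorem exp_neg_sub_exp_neg_two_mul_euler_error_le {ε t : ℝ} (hε0 : 0 ≤ ε) (hε : ε ≤ 1 / 2)
    (ht : 0 ≤ t) :
    (exp (-(t + ε)) - exp (-(2 * (t + ε)))) - (1 - 2 * ε) * (exp (-t) - exp (-(2 * t)))
      - ε * exp (-(t + ε)) ≤ 2 * ε ^ 2 := by
  have hshift : exp (-t) = exp (-(t + ε)) * exp ε := by rw [← exp_add]; ring_nf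
  rw [exp_neg_two_mul, exp_neg_two_mul, hshift]
  set x := exp (-(t + ε))
  set u := exp ε
  have hx0 : 0 < x := exp_pos _
  have hx1 : x ≤ 1 := exp_le_one_iff.mpr (by linarith)
  have hu1 : 1 + ε ≤ u := by linarith [add_one_le_exp ε]
  have hu2 : u * (1 - ε) ≤ 1 := by
    have := mul_le_mul_of_nonneg_left (one_sub_le_exp_neg ε) (exp_pos ε).le
    rwa [← exp_add, add_neg_cancel, exp_zero] at this
  -- the left side equals `x (1 - (1 - 2ε) u - ε) - x² (1 - (1 - 2ε) u²)`
  have hlin : 1 - (1 - 2 * ε) * u - ε ≤ 2 * ε ^ 2 := by nlinarith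
  have hquad : 0 ≤ 1 - (1 - 2 * ε) * u ^ 2 := by
    have : (u * (1 - ε)) ^ 2 ≤ 1 :=
      pow_le_one₀ (mul_nonneg (exp_pos ε).le (by linarith)) hu2
    nlinarith [sq_nonneg (ε * u)]
  nlinarith [mul_le_mul_of_nonneg_left hlin hx0.le, mul_nonneg (sq_nonneg x) hquad]

theorem sq_mul_exp_neg_two_mul_euler_error_le {ε t : ℝ} (hε0 : 0 ≤ ε) (hε : ε ≤ 1 / 2)
    (ht0 : 0 ≤ t) (ht1 : t ≤ 1) :
    (t + ε) ^ 2 * exp (-(2 * (t + ε))) / 2 - (1 - 2 * ε) * (t ^ 2 * exp (-(2 * t)) / 2)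
      - ε * t * exp (-(2 * (t + ε))) ≤ 5 / 2 * ε ^ 2 := by
  have hshift : exp (-t) = exp (-(t + ε)) * exp ε := by rw [← exp_add]; ring_nf
  rw [exp_neg_two_mul, exp_neg_two_mul, hshift]
  set x := exp (-(t + ε))
  set u := exp ε
  have hu1 : 1 + ε ≤ u := by linarith [add_one_le_exp ε]
  have h2ε : (0 : ℝ) ≤ 1 - 2 * ε := by linarith
  have hu : 1 - 4 * ε ^ 2 ≤ (1 - 2 * ε) * u ^ 2 := by
    nlinarith [mul_le_mul_of_nonneg_left (pow_le_pow_left₀ (by linarith) hu1 2) h2ε,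
      mul_nonneg (sq_nonneg ε) h2ε]
  -- the left side equals `x² ((t + ε)²/2 - (1 - 2ε) u² t²/2 - εt)`, and `(1 - 2ε) u² ≥ 1 - 4ε²`
  -- bounds the bracket by `ε²/2 + 2ε²t²`
  have hbracket : (t + ε) ^ 2 / 2 - (1 - 2 * ε) * u ^ 2 * t ^ 2 / 2 - ε * t ≤ 5 / 2 * ε ^ 2 := by
    nlinarith [mul_le_mul_of_nonneg_right hu (sq_nonneg t),
      mul_le_mul_of_nonneg_left (show t ^ 2 ≤ 1 by nlinarith) (sq_nonneg ε)]
  have hx2 : x ^ 2 ≤ 1 := pow_le_one₀ (exp_pos _).le (exp_le_one_iff.mpr (by linarith))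
  nlinarith [mul_le_mul_of_nonneg_left hbracket (sq_nonneg x),
    mul_nonneg (sq_nonneg x) (sq_nonneg ε)]

theorem euler_local_error_le {A B α ε : ℝ} (n : ℕ) (hA : 0 ≤ A) (hB : 0 ≤ B) (hα : 0 ≤ α)
    (hε0 : 0 ≤ ε) (hε : ε ≤ 1 / 2) (hn : ε * (n + 1) ≤ 1) :
    α * ((exp (-(ε * (n + 1))) - exp (-(2 * (ε * (n + 1))))) * A
        + (ε * (n + 1)) ^ 2 * exp (-(2 * (ε * (n + 1)))) / 2 * B)
      - (1 - 2 * ε) * (α * ((exp (-(ε * n)) - exp (-(2 * (ε * n)))) * A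
        + (ε * n) ^ 2 * exp (-(2 * (ε * n))) / 2 * B))
      - ε * α * ((1 - ε) ^ (n + 1) * A + ε * (1 - ε) ^ (2 * n) * n * B)
      ≤ 5 * ε ^ 2 * (α * A + α * B) := by
  have hn0 : 0 ≤ ε * n := by positivity
  have hpowA := exp_neg_mul_sub_le_one_sub_pow hε0 (by linarith) (n + 1)
  have hpowB := exp_neg_mul_sub_le_one_sub_pow hε0 (by linarith) (2 * n)
  push_cast at hpowA hpowB
  have hmono : exp (-(2 * (ε * n + ε))) ≤ exp (-(ε * (2 * n))) := exp_le_exp.mpr (by nlinarith)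
  rw [show ε * (n + 1) = ε * n + ε by ring] at hpowA ⊢
  have hA' : (exp (-(ε * n + ε)) - exp (-(2 * (ε * n + ε))))
      - (1 - 2 * ε) * (exp (-(ε * n)) - exp (-(2 * (ε * n)))) - ε * (1 - ε) ^ (n + 1)
      ≤ 3 * ε ^ 2 := by
    have := exp_neg_sub_exp_neg_two_mul_euler_error_le hε0 hε hn0
    nlinarith [mul_le_mul_of_nonneg_left hn (sq_nonneg ε)]
  have hB' : (ε * n + ε) ^ 2 * exp (-(2 * (ε * n + ε))) / 2
      - (1 - 2 * ε) * ((ε * n) ^ 2 * exp (-(2 * (ε * n))) / 2)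
      - ε * (ε * (1 - ε) ^ (2 * n) * n) ≤ 5 * ε ^ 2 := by
    have := sq_mul_exp_neg_two_mul_euler_error_le hε0 hε hn0 (by linarith)
    have hsq : (ε * n) ^ 2 ≤ 1 := by nlinarith
    nlinarith [mul_le_mul_of_nonneg_left hsq (sq_nonneg ε),
      mul_le_mul_of_nonneg_left (by linarith : exp (-(2 * (ε * n + ε))) - (1 - ε) ^ (2 * n)
        ≤ 2 * n * ε ^ 2) (mul_nonneg hε0 hn0)]
  nlinarith [mul_le_mul_of_nonneg_left hA' (mul_nonneg hα hA),
    mul_le_mul_of_nonneg_left hB' (mul_nonneg hα hB),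
    mul_nonneg (sq_nonneg ε) (mul_nonneg hα hA)]

theorem le_of_euler_step_le {ε K : ℝ} {N : ℕ} {v w : ℕ → ℝ} (hε0 : 0 ≤ ε) (hε : 2 * ε ≤ 1)
    (hK : 0 ≤ K) (hv : ∀ i ≤ N, 0 ≤ v i) (h0 : w 0 ≤ v 0)
    (hstep : ∀ n < N,
      w (n + 1) - (1 - 2 * ε) * w n - K ≤ v (n + 1) - (1 - 2 * ε - 3 * ε ^ 2) * v n) :
    ∀ i ≤ N, w i - 3 * ε ^ 2 * ∑ j ∈ Icc 1 i, v (j - 1) - i * K ≤ v i := by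
  intro i
  induction i with
  | zero => intro _; simpa using h0
  | succ n ih =>
    intro hn
    have hS : 0 ≤ ∑ j ∈ Icc 1 n, v (j - 1) :=
      sum_nonneg fun j hj => hv _ (by simp only [mem_Icc] at hj; omega)
    have hcontract := mul_le_mul_of_nonneg_left (ih (by omega)) (by linarith : 0 ≤ 1 - 2 * ε)
    have hnK : 0 ≤ (n : ℝ) * K := by positivity
    rw [sum_Icc_succ_top (by omega), Nat.add_sub_cancel]
    push_cast
    linarith [hstep n (by omega), mul_nonneg hε0 (mul_nonneg (sq_nonneg ε) hS),
      mul_nonneg hε0 hnK]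

/-- Lemma 4.10 / `lem:bound1`, abstract form: with
`g(t) = (e^{−t} − e^{−2t})·A + (t²e^{−2t}/2)·B`, there is a constant `C' > 0` depending only
on `C` such that any nonnegative sequence `v₀, …, v_{1/ε}` satisfying the stated recursive
lower bound also satisfies, for every `0 ≤ i ≤ 1/ε`,
`vᵢ ≥ α·g(εi) − 3ε²·∑_{i'=1}^{i} v_{i'−1} − i·C'·ε²·(αA + αB + E)`. -/
theorem stmt_9 (C : ℝ) (hC : 0 < C) :
    ∃ C' : ℝ, 0 < C' ∧
      ∀ (A B E α ε : ℝ) (N : ℕ) (v : ℕ → ℝ),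
        0 ≤ A → 0 ≤ B → 0 ≤ E → 0 ≤ α → α ≤ 1 → 0 < ε → ε < 1 → (N : ℝ) * ε = 1 →
        (∀ i ≤ N, 0 ≤ v i) →
        (∀ i, 1 ≤ i → i ≤ N →
          ε * α * ((1 - ε)^i * A + ε * (1 - ε)^(2*i-2) * ((i : ℝ) - 1) * B)
            - 2*ε * v (i-1) - 3*ε^2 * v (i-1) - C*ε^2*E ≤ v i - v (i-1)) →
        ∀ i ≤ N,
          α * ((Real.exp (-(ε*i)) - Real.exp (-(2*(ε*i)))) * A
              + (ε*i)^2 * Real.exp (-(2*(ε*i))) / 2 * B)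
            - 3*ε^2 * ∑ i' ∈ Finset.Icc 1 i, v (i' - 1)
            - i * C' * ε^2 * (α*A + α*B + E) ≤ v i := by
  refine ⟨C + 5, by linarith, ?_⟩
  intro A B E α ε N v hA hB hE hα _ hε0 hε1 hNε hv hrec i hi
  have hN : 1 < N := by exact_mod_cast (show (1 : ℝ) < N by nlinarith)
  have hε : ε ≤ 1 / 2 := by
    nlinarith [mul_le_mul_of_nonneg_right (by exact_mod_cast hN : (2 : ℝ) ≤ N) hε0.le]
  have hK : 0 ≤ (C + 5) * ε ^ 2 * (α * A + α * B + E) := by positivity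
  have key := le_of_euler_step_le (K := (C + 5) * ε ^ 2 * (α * A + α * B + E))
    (w := fun n : ℕ => α * ((exp (-(ε * n)) - exp (-(2 * (ε * n)))) * A
      + (ε * n) ^ 2 * exp (-(2 * (ε * n))) / 2 * B))
    hε0.le (by linarith) hK hv (by simpa using hv 0 N.zero_le) ?_ i hi
  · linarith
  intro n hn
  have hrec_succ := hrec (n + 1) (by omega) hn
  rw [show 2 * (n + 1) - 2 = 2 * n by omega, Nat.add_sub_cancel] at hrec_succ
  have hn' : ε * (n + 1) ≤ 1 := by
    have : (n : ℝ) + 1 ≤ N := by exact_mod_cast hn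
    nlinarith
  have := euler_local_error_le n hA hB hα hε0.le hε hn'
  push_cast at hrec_succ ⊢
  linarith [mul_nonneg (mul_nonneg hC.le (sq_nonneg ε)) (mul_nonneg hα hA),
    mul_nonneg (mul_nonneg hC.le (sq_nonneg ε)) (mul_nonneg hα hB), mul_nonneg (sq_nonneg ε) hE]
end

section
/- Let A, B₁, B₂, E ≥ 0, m ∈ [0,1), C > 0, ε ∈ (0,1) with 1/ε ∈ ℕ, and set α = (1−m)(1−ε)². There exist constants C₁, C₂ > 0 depending only on C such that: if nonnegative real numbers v₀, v₁, …, v_{1/ε} satisfy, for every integer 1 ≤ i ≤ 1/ε, v_i − v_{i−1} ≥ max{ ε(1−m)·[(1−ε)^i·A + ε(1−ε)^{2i−2}(i−1)·B₁] − 2ε·v_{i−1}, ε(1−m)(1−ε)^i·B₂ − ε·v_{i−1} } − 3ε²·v_{i−1} − Cε²·E, then (1 + C₁ε)·max_{0 ≤ i ≤ 1/ε} v_i ≥ α·max_{t_s ∈ [0,1]} max_{T ∈ [t_s,1]} { ((T − t_s)e^{−T} − C₂ε)·B₂ + (t_s²·e^{−t_s−T}/2 − C₂ε)·B₁ + (e^{−T}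 − e^{−t_s−T} − C₂ε)·A } − C₂ε·E. -/
/-!
Reading the recursion through the first branch of the maximum gives
`v_{i+1} ≥ (1 - 2ε - 3ε²) v_i + ε(1-m)[(1-ε)^{i+1} A + ε(1-ε)^{2i} i B₁] - Cε²E`, and through
the second `v_{i+1} ≥ (1 - ε - 3ε²) v_i + ε(1-m)(1-ε)^{i+1} B₂ - Cε²E`. Use the first up to
`k = ⌈t_s/ε⌉` and the second from `k` to `n = ⌈T/ε⌉`: by comparison with explicit subsolutions,
`v_n` is bounded below by discrete analogues of `e^{-t_s} - e^{-2t_s}`, `t_s² e^{-2t_s}/2` and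
`(T - t_s)`, damped by the powers `(1 - ε - 3ε²)^{n-k} ≈ e^{-(T-t_s)}` and `(1-ε)^n ≈ e^{-T}`.
Each of these approximations costs `O(ε)`, which `C₂ε` absorbs. For `ε > 1/20` there is nothing
to prove, since then `C₂ε ≥ 1` makes every coefficient of the profile nonpositive.
-/

open Real Set

lemma exp_neg_sub_le_pow {a δ t η : ℝ} {j : ℕ} (ha : exp (-δ) ≤ a) (ht : 0 ≤ t) (hη : 0 ≤ η)
    (hj : j * δ ≤ t + η) : exp (-t) - η ≤ a ^ j :=
  calc exp (-t) - η ≤ exp (-t) * (1 - η) := by nlinarith [exp_le_one_iff.2 (neg_nonpos.2 ht)]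
    _ ≤ exp (-t) * exp (-η) := by gcongr; exact one_sub_le_exp_neg η
    _ = exp (-(t + η)) := by rw [← exp_add, neg_add]
    _ ≤ exp (j * -δ) := exp_le_exp.2 (by linarith)
    _ = exp (-δ) ^ j := exp_nat_mul _ _
    _ ≤ a ^ j := pow_le_pow_left₀ (exp_nonneg _) ha j

lemma pow_le_exp_neg {a δ t : ℝ} {j : ℕ} (ha₀ : 0 ≤ a) (ha : a ≤ exp (-δ)) (hj : t ≤ j * δ) :
    a ^ j ≤ exp (-t) :=
  calc a ^ j ≤ exp (-δ) ^ j := pow_le_pow_left₀ ha₀ ha j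
    _ = exp (j * -δ) := (exp_nat_mul _ _).symm
    _ ≤ exp (-t) := exp_le_exp.2 (by linarith)

lemma exp_neg_mem_Icc {x : ℝ} (hx : 0 ≤ x) : exp (-x) ∈ Icc (0 : ℝ) 1 :=
  ⟨(exp_pos _).le, exp_le_one_iff.2 (neg_nonpos.2 hx)⟩

lemma mul_sub_add_le_mul {X Y D₁ D₂ a b : ℝ} (hX : X ∈ Icc (0 : ℝ) 1) (hY : Y ∈ Icc (0 : ℝ) 1)
    (hD₁ : 0 ≤ D₁) (hD₂ : 0 ≤ D₂) (ha : 0 ≤ a) (hb : 0 ≤ b) (h₁ : X - a ≤ D₁)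
    (h₂ : Y - b ≤ D₂) : X * Y - (a + b) ≤ D₁ * D₂ := by
  obtain ⟨hX₀, hX₁⟩ := hX
  obtain ⟨hY₀, hY₁⟩ := hY
  rcases le_or_gt X a with hXa | hXa
  · nlinarith [mul_nonneg hD₁ hD₂]
  rcases le_or_gt Y b with hYb | hYb
  · nlinarith [mul_nonneg hD₁ hD₂]
  nlinarith [mul_le_mul h₁ h₂ (by linarith) hD₁, mul_nonneg ha hb]

lemma sub_add_le_one_sub_mul {Y D a b : ℝ} (hY : Y ∈ Icc (0 : ℝ) 1) (hD : 0 ≤ D) (ha₀ : 0 ≤ a)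
    (ha₁ : a ≤ 1) (hb : 0 ≤ b) (h : Y - b ≤ D) : Y - (a + b) ≤ (1 - a) * D := by
  simpa using mul_sub_add_le_mul ⟨zero_le_one, le_rfl⟩ hY (by linarith) hD ha₀ hb le_rfl h

lemma mul_le_of_le_of_le_one_of_nonneg {a x D : ℝ} (ha₀ : 0 ≤ a) (ha₁ : a ≤ 1) (hD : 0 ≤ D)
    (hx : x ≤ D) : a * x ≤ D := by
  rcases le_or_gt x 0 with h | h <;> nlinarith

lemma le_of_subsolution {ρ : ℝ} (hρ : 0 ≤ ρ) {g u w : ℕ → ℝ} {a b : ℕ}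
    (hu : ∀ i, a ≤ i → i < b → ρ * u i + g i ≤ u (i + 1))
    (hw : ∀ i, a ≤ i → i < b → w (i + 1) ≤ ρ * w i + g i)
    (ha : w a ≤ u a) {i : ℕ} (hai : a ≤ i) (hib : i ≤ b) : w i ≤ u i := by
  induction i, hai using Nat.le_induction with
  | base => exact ha
  | succ j haj ih =>
    calc w (j + 1) ≤ ρ * w j + g j := hw j haj (by omega)
      _ ≤ ρ * u j + g j := by gcongr; exact ih (by omega)
      _ ≤ u (j + 1) := hu j haj (by omega)

section Discrete

variable {ε : ℝ}

lemma exp_neg_le_one_sub_sub (hε₀ : 0 ≤ ε) (hε : ε ≤ 1 / 20) :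
    exp (-(ε + 5 * ε ^ 2)) ≤ 1 - ε - 3 * ε ^ 2 := by
  have hx : |-(ε + 5 * ε ^ 2)| ≤ 1 := by rw [abs_le]; constructor <;> nlinarith
  have := (abs_le.mp (abs_exp_sub_one_sub_id_le hx)).2
  nlinarith [mul_nonneg (sq_nonneg ε) (by nlinarith : (0 : ℝ) ≤ 2 - (1 + 5 * ε) ^ 2)]

lemma exp_neg_sub_le_pow_one_sub_sub {t : ℝ} {j : ℕ} (hε₀ : 0 ≤ ε) (hε : ε ≤ 1 / 20)
    (ht : 0 ≤ t) (hj : j * ε ≤ t + ε) (hj₁ : j * ε ≤ 1) :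
    exp (-t) - 6 * ε ≤ (1 - ε - 3 * ε ^ 2) ^ j :=
  exp_neg_sub_le_pow (exp_neg_le_one_sub_sub hε₀ hε) ht (by positivity)
    (by nlinarith [mul_le_mul_of_nonneg_left hj₁ (by positivity : (0 : ℝ) ≤ 5 * ε)])

lemma exp_neg_sub_le_pow_one_sub {t : ℝ} {j : ℕ} (hε₀ : 0 ≤ ε) (hε : ε ≤ 1 / 20)
    (ht : 0 ≤ t) (hj : j * ε ≤ t + ε) (hj₁ : j * ε ≤ 1) :
    exp (-t) - 6 * ε ≤ (1 - ε) ^ j :=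
  (exp_neg_sub_le_pow_one_sub_sub hε₀ hε ht hj hj₁).trans
    (pow_le_pow_left₀ (by nlinarith) (by nlinarith) j)

/- The factor `1 - 4ε` is slack that absorbs the `O(ε²)` losses of one step of the recursion. -/
noncomputable def discreteA (ε : ℝ) (i : ℕ) : ℝ :=
  (1 - 4 * ε) * ((1 - ε) ^ i - (1 - 2 * ε - 3 * ε ^ 2) ^ i)

noncomputable def discreteB₁ (ε : ℝ) (i : ℕ) : ℝ :=
  (1 - 4 * ε) * (ε ^ 2 * i * (i - 1) / 2) * (1 - ε) ^ (2 * i)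

noncomputable def discreteB₂ (ε : ℝ) (k i : ℕ) : ℝ :=
  (1 - 4 * ε) * ((i - k) * ε) * (1 - ε) ^ i

lemma discreteA_succ_le (hε₀ : 0 ≤ ε) (hε₁ : ε ≤ 1) (i : ℕ) :
    discreteA ε (i + 1) ≤ (1 - 2 * ε - 3 * ε ^ 2) * discreteA ε i + ε * (1 - ε) ^ (i + 1) := by
  unfold discreteA
  rw [pow_succ, pow_succ, pow_succ]
  nlinarith [mul_nonneg (pow_nonneg (by linarith : 0 ≤ 1 - ε) i) (pow_nonneg hε₀ 3)]

lemma discreteB₁_succ_le (hε₀ : 0 ≤ ε) (hε : 4 * ε ≤ 1) {i : ℕ} (hi : i * ε ≤ 1) :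
    discreteB₁ ε (i + 1)
      ≤ (1 - 2 * ε - 3 * ε ^ 2) * discreteB₁ ε i + ε ^ 2 * (1 - ε) ^ (2 * i) * i := by
  unfold discreteB₁
  rw [show 2 * (i + 1) = 2 * i + 2 by ring, pow_add]
  push_cast
  have hgap : 0 ≤ 1 - (1 - 4 * ε) * ((1 - ε) ^ 2 + 2 * ε ^ 2 * (i - 1)) := by
    nlinarith [mul_le_mul_of_nonneg_left hi (by linarith : (0 : ℝ) ≤ 2 * ε),
      mul_nonneg (pow_nonneg hε₀ 3) (Nat.cast_nonneg (α := ℝ) i)]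
  nlinarith [mul_nonneg (mul_nonneg (sq_nonneg ε) (pow_nonneg (by linarith : 0 ≤ 1 - ε) (2 * i)))
    (mul_nonneg (Nat.cast_nonneg (α := ℝ) i) hgap)]

lemma discreteB₂_succ_le (hε₀ : 0 ≤ ε) (hε : 4 * ε ≤ 1) {k i : ℕ} (hki : k ≤ i)
    (hi : (i - k) * ε ≤ 1) :
    discreteB₂ ε k (i + 1) ≤ (1 - ε - 3 * ε ^ 2) * discreteB₂ ε k i + ε * (1 - ε) ^ (i + 1) := by
  unfold discreteB₂
  have hd : (0 : ℝ) ≤ i - k := sub_nonneg.2 (Nat.cast_le.2 hki)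
  have hgap : (1 - 4 * ε) * (3 * ε ^ 2 * (i - k)) ≤ 4 * ε * (1 - ε) := by
    nlinarith [mul_le_mul_of_nonneg_left hi (by linarith : (0 : ℝ) ≤ 3 * ε),
      mul_nonneg (pow_nonneg hε₀ 3) hd]
  rw [pow_succ]
  push_cast
  nlinarith [mul_le_mul_of_nonneg_left hgap
    (mul_nonneg hε₀ (pow_nonneg (by linarith : 0 ≤ 1 - ε) i))]

lemma cast_mul_cast_sub_one_nonneg (k : ℕ) : 0 ≤ (k : ℝ) * (k - 1) := by
  rcases Nat.eq_zero_or_pos k with rfl | hk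
  · simp
  · have : (1 : ℝ) ≤ k := by exact_mod_cast hk
    nlinarith

lemma discreteA_nonneg (hε₀ : 0 ≤ ε) (hε : 4 * ε ≤ 1) (k : ℕ) : 0 ≤ discreteA ε k :=
  mul_nonneg (by linarith) (sub_nonneg.2 (pow_le_pow_left₀ (by nlinarith) (by nlinarith) k))

lemma discreteB₁_nonneg (hε : 4 * ε ≤ 1) (k : ℕ) : 0 ≤ discreteB₁ ε k := by
  have := cast_mul_cast_sub_one_nonneg k
  have : 0 ≤ ε ^ 2 * k * (k - 1) := by rw [mul_assoc]; positivity
  unfold discreteB₁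
  rw [pow_mul]
  exact mul_nonneg (mul_nonneg (by linarith) (by linarith)) (by positivity)

lemma discreteB₂_nonneg (hε₀ : 0 ≤ ε) (hε : 4 * ε ≤ 1) {k n : ℕ} (hkn : k ≤ n) :
    0 ≤ discreteB₂ ε k n := by
  have : (0 : ℝ) ≤ n - k := sub_nonneg.2 (Nat.cast_le.2 hkn)
  exact mul_nonneg (mul_nonneg (by linarith) (by positivity)) (pow_nonneg (by linarith) n)

end Discrete

section Recursion

variable {ε μ C E : ℝ} {N : ℕ} {v : ℕ → ℝ}

lemma steps_of_recursion {A B₁ B₂ m : ℝ}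
    (hrec : ∀ i, 1 ≤ i → i ≤ N →
      max (ε * (1 - m) * ((1 - ε)^i * A + ε * (1 - ε)^(2*i-2) * ((i : ℝ) - 1) * B₁)
            - 2*ε * v (i-1))
          (ε * (1 - m) * (1 - ε)^i * B₂ - ε * v (i-1))
        - 3*ε^2 * v (i-1) - C*ε^2*E ≤ v i - v (i-1))
    {i : ℕ} (hi : i < N) :
    (1 - 2 * ε - 3 * ε ^ 2) * v i
        + (ε * (1 - m) * ((1 - ε) ^ (i + 1) * A + ε * (1 - ε) ^ (2 * i) * i * B₁)
          - C * ε ^ 2 * E) ≤ v (i + 1) ∧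
      (1 - ε - 3 * ε ^ 2) * v i + (ε * (1 - m) * (1 - ε) ^ (i + 1) * B₂ - C * ε ^ 2 * E)
        ≤ v (i + 1) := by
  have h := hrec (i + 1) (by omega) hi
  rw [Nat.add_sub_cancel, show 2 * (i + 1) - 2 = 2 * i by omega, sub_sub, sub_le_iff_le_add,
    max_le_iff] at h
  push_cast at h
  constructor <;> linarith [h.1, h.2]

lemma phase_one_le {A B₁ : ℝ} (hε₀ : 0 ≤ ε) (hε : 4 * ε ≤ 1) (hμ : 0 ≤ μ) (hA : 0 ≤ A)
    (hB₁ : 0 ≤ B₁) (hC : 0 ≤ C) (hE : 0 ≤ E) (hN : N * ε ≤ 1) (hv₀ : 0 ≤ v 0)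
    (hstep : ∀ i < N, (1 - 2 * ε - 3 * ε ^ 2) * v i
        + (ε * μ * ((1 - ε) ^ (i + 1) * A + ε * (1 - ε) ^ (2 * i) * i * B₁) - C * ε ^ 2 * E)
        ≤ v (i + 1))
    {i : ℕ} (hi : i ≤ N) :
    μ * (A * discreteA ε i + B₁ * discreteB₁ ε i) - i * C * ε ^ 2 * E ≤ v i := by
  refine le_of_subsolution
    (w := fun i ↦ μ * (A * discreteA ε i + B₁ * discreteB₁ ε i) - i * C * ε ^ 2 * E)
    (by nlinarith) (fun j _ hj ↦ hstep j hj) (fun j _ hj ↦ ?_) ?_ (Nat.zero_le i) hi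
  · have hjε : (j : ℝ) * ε ≤ 1 := le_trans (by gcongr) hN
    have hA' := mul_le_mul_of_nonneg_left (discreteA_succ_le hε₀ (by linarith) j)
      (mul_nonneg hμ hA)
    have hB' := mul_le_mul_of_nonneg_left (discreteB₁_succ_le hε₀ hε hjε) (mul_nonneg hμ hB₁)
    have hE' : (1 - 2 * ε - 3 * ε ^ 2) * (j * C * ε ^ 2 * E) ≤ j * C * ε ^ 2 * E :=
      mul_le_of_le_one_left (by positivity) (by nlinarith)
    push_cast
    linarith
  · simpa [discreteA, discreteB₁] using hv₀

lemma phase_two_le {B₂ P : ℝ} {k : ℕ} (hε₀ : 0 ≤ ε) (hε : 4 * ε ≤ 1) (hμ : 0 ≤ μ)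
    (hB₂ : 0 ≤ B₂) (hC : 0 ≤ C) (hE : 0 ≤ E) (hN : N * ε ≤ 1)
    (hstep : ∀ i < N,
      (1 - ε - 3 * ε ^ 2) * v i + (ε * μ * (1 - ε) ^ (i + 1) * B₂ - C * ε ^ 2 * E) ≤ v (i + 1))
    (hk : P - k * C * ε ^ 2 * E ≤ v k) {i : ℕ} (hki : k ≤ i) (hi : i ≤ N) :
    (1 - ε - 3 * ε ^ 2) ^ (i - k) * P + μ * B₂ * discreteB₂ ε k i - i * C * ε ^ 2 * E ≤ v i := by
  refine le_of_subsolution (w := fun i ↦ (1 - ε - 3 * ε ^ 2) ^ (i - k) * P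
      + μ * B₂ * discreteB₂ ε k i - i * C * ε ^ 2 * E)
    (by nlinarith) (fun j _ hj ↦ hstep j hj) (fun j hkj hj ↦ ?_) ?_ hki hi
  · have hjε : ((j : ℝ) - k) * ε ≤ 1 := by
      have : (j : ℝ) * ε ≤ 1 := le_trans (by gcongr) hN
      nlinarith [mul_nonneg (Nat.cast_nonneg (α := ℝ) k) hε₀]
    have hB' := mul_le_mul_of_nonneg_left (discreteB₂_succ_le hε₀ hε hkj hjε) (mul_nonneg hμ hB₂)
    have hE' : (1 - ε - 3 * ε ^ 2) * (j * C * ε ^ 2 * E) ≤ j * C * ε ^ 2 * E :=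
      mul_le_of_le_one_left (by positivity) (by nlinarith)
    rw [Nat.sub_add_comm hkj, pow_succ]
    push_cast
    linarith
  · simpa [discreteB₂] using hk

end Recursion

section Endpoint

variable {ε ts T : ℝ} {k n : ℕ}

lemma exp_neg_sub_le_pow_sub (hε₀ : 0 ≤ ε) (hε : ε ≤ 1 / 20) (htsT : ts ≤ T)
    (hk : ts ≤ k * ε) (hkn : k ≤ n) (hn : n * ε ≤ T + ε) (hn₁ : n * ε ≤ 1) :
    exp (-(T - ts)) - 6 * ε ≤ (1 - ε - 3 * ε ^ 2) ^ (n - k) := by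
  have hk₀ : 0 ≤ (k : ℝ) * ε := by positivity
  exact exp_neg_sub_le_pow_one_sub_sub hε₀ hε (by linarith) (by push_cast [hkn]; linarith)
    (by push_cast [hkn]; linarith)

lemma sub_le_pow_sub_mul_discreteA (hε₀ : 0 ≤ ε) (hε : ε ≤ 1 / 20) (hts₀ : 0 ≤ ts)
    (htsT : ts ≤ T) (hk : (k : ℝ) * ε ∈ Icc ts (ts + ε)) (hkn : k ≤ n) (hn : n * ε ≤ T + ε)
    (hn₁ : n * ε ≤ 1) :
    exp (-T) - exp (-ts - T) - 16 * ε ≤ (1 - ε - 3 * ε ^ 2) ^ (n - k) * discreteA ε k := by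
  have hk₁ : (k : ℝ) * ε ≤ 1 := le_trans (by gcongr) hn₁
  have hq := exp_neg_sub_le_pow_one_sub hε₀ hε hts₀ hk.2 hk₁
  have hr : (1 - 2 * ε - 3 * ε ^ 2) ^ k ≤ exp (-(2 * ts)) :=
    pow_le_exp_neg (by nlinarith) ((by nlinarith : _ ≤ 1 - 2 * ε).trans (one_sub_le_exp_neg _))
      (by linarith [hk.1])
  have hmono : exp (-(2 * ts)) ≤ exp (-ts) := exp_le_exp.2 (by linarith)
  have hY : exp (-ts) - exp (-(2 * ts)) ∈ Icc (0 : ℝ) 1 :=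
    ⟨by linarith, by linarith [(exp_neg_mem_Icc hts₀).2, exp_pos (-(2 * ts))]⟩
  have h₁ := sub_add_le_one_sub_mul (a := 4 * ε) (b := 6 * ε)
    (D := (1 - ε) ^ k - (1 - 2 * ε - 3 * ε ^ 2) ^ k) hY
    (sub_nonneg.2 (pow_le_pow_left₀ (by nlinarith) (by nlinarith) k)) (by positivity)
    (by linarith) (by positivity) (by linarith)
  have h₂ := mul_sub_add_le_mul (b := 4 * ε + 6 * ε) (D₂ := discreteA ε k)
    (exp_neg_mem_Icc (sub_nonneg.2 htsT)) hY (pow_nonneg (by nlinarith) _)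
    (discreteA_nonneg hε₀ (by linarith) k) (by positivity) (by positivity)
    (exp_neg_sub_le_pow_sub hε₀ hε htsT hk.1 hkn hn hn₁) h₁
  have hexp : exp (-(T - ts)) * (exp (-ts) - exp (-(2 * ts))) = exp (-T) - exp (-ts - T) := by
    rw [mul_sub, ← exp_add, ← exp_add]; ring_nf
  linarith

lemma sub_le_pow_sub_mul_discreteB₁ (hε₀ : 0 ≤ ε) (hε : ε ≤ 1 / 20) (hts₀ : 0 ≤ ts)
    (htsT : ts ≤ T) (hT₁ : T ≤ 1) (hk : (k : ℝ) * ε ∈ Icc ts (ts + ε)) (hkn : k ≤ n)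
    (hn : n * ε ≤ T + ε) (hn₁ : n * ε ≤ 1) :
    ts ^ 2 * exp (-ts - T) / 2 - 23 * ε ≤ (1 - ε - 3 * ε ^ 2) ^ (n - k) * discreteB₁ ε k := by
  have hk₁ : (k : ℝ) * ε ≤ 1 := le_trans (by gcongr) hn₁
  have hts₁ : ts ≤ 1 := htsT.trans hT₁
  have hq := exp_neg_sub_le_pow_one_sub hε₀ hε hts₀ hk.2 hk₁
  have hq₂ : exp (-(2 * ts)) - (6 * ε + 6 * ε) ≤ (1 - ε) ^ (2 * k) := by
    have := mul_sub_add_le_mul (exp_neg_mem_Icc hts₀) (exp_neg_mem_Icc hts₀)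
      (pow_nonneg (by linarith) k) (pow_nonneg (by linarith) k) (by positivity) (by positivity)
      hq hq
    rwa [← exp_add, ← pow_add, ← two_mul k, show -ts + -ts = -(2 * ts) by ring] at this
  have hkk := cast_mul_cast_sub_one_nonneg k
  have hsq : ts ^ 2 / 2 - ε ≤ ε ^ 2 * k * (k - 1) / 2 := by
    nlinarith [mul_self_le_mul_self hts₀ hk.1]
  have hX : ts ^ 2 / 2 ∈ Icc (0 : ℝ) 1 := ⟨by positivity, by nlinarith⟩
  have hY : ts ^ 2 / 2 * exp (-(2 * ts)) ∈ Icc (0 : ℝ) 1 :=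
    ⟨mul_nonneg hX.1 (exp_neg_mem_Icc (by linarith)).1,
      mul_le_one₀ hX.2 (exp_neg_mem_Icc (by linarith)).1 (exp_neg_mem_Icc (by linarith)).2⟩
  have h₁ := sub_add_le_one_sub_mul (a := 4 * ε) hX (by rw [mul_assoc]; positivity)
    (by positivity) (by linarith) hε₀ hsq
  have h₂ := mul_sub_add_le_mul hX (exp_neg_mem_Icc (by linarith))
    (mul_nonneg (by linarith) (by rw [mul_assoc]; positivity)) (pow_nonneg (by linarith) _)
    (by positivity) (by positivity) h₁ hq₂
  have h₃ := mul_sub_add_le_mul (exp_neg_mem_Icc (sub_nonneg.2 htsT)) hY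
    (pow_nonneg (by nlinarith) _) (discreteB₁_nonneg (by linarith) k) (by positivity)
    (by positivity) (exp_neg_sub_le_pow_sub hε₀ hε htsT hk.1 hkn hn hn₁) h₂
  have hexp : exp (-(T - ts)) * (ts ^ 2 / 2 * exp (-(2 * ts))) = ts ^ 2 * exp (-ts - T) / 2 := by
    rw [mul_left_comm, ← exp_add]; ring_nf
  linarith

lemma sub_le_discreteB₂ (hε₀ : 0 ≤ ε) (hε : ε ≤ 1 / 20) (hts₀ : 0 ≤ ts) (htsT : ts ≤ T)
    (hT₁ : T ≤ 1) (hk : (k : ℝ) * ε ≤ ts + ε) (hkn : k ≤ n) (hn : (n : ℝ) * ε ∈ Icc T (T + ε))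
    (hn₁ : n * ε ≤ 1) :
    (T - ts) * exp (-T) - 11 * ε ≤ discreteB₂ ε k n := by
  have hnk : (0 : ℝ) ≤ n - k := sub_nonneg.2 (Nat.cast_le.2 hkn)
  have hX : T - ts ∈ Icc (0 : ℝ) 1 := ⟨by linarith, by linarith⟩
  have h₁ := sub_add_le_one_sub_mul (a := 4 * ε) (D := (n - k) * ε) hX (by positivity)
    (by positivity) (by linarith) hε₀ (by linarith [hn.1])
  have h₂ := mul_sub_add_le_mul hX (exp_neg_mem_Icc (hts₀.trans htsT))
    (mul_nonneg (by linarith) (by positivity)) (pow_nonneg (by linarith) _) (by positivity)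
    (by positivity) h₁ (exp_neg_sub_le_pow_one_sub hε₀ hε (hts₀.trans htsT) hn.2 hn₁)
  unfold discreteB₂
  linarith

lemma nat_ceil_mul_mem_Icc {t : ℝ} {N : ℕ} (hε : 0 < ε) (hN : N * ε = 1) (ht₀ : 0 ≤ t)
    (ht₁ : t ≤ 1) : (⌈t * N⌉₊ : ℝ) * ε ∈ Icc t (t + ε) ∧ ⌈t * N⌉₊ ≤ N := by
  have htN : t * N * ε = t := by rw [mul_assoc, hN, mul_one]
  refine ⟨⟨?_, ?_⟩, Nat.ceil_le.2 (by nlinarith)⟩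
  · nlinarith [Nat.le_ceil (t * N)]
  · nlinarith [Nat.ceil_lt_add_one (by positivity : 0 ≤ t * N)]

end Endpoint

noncomputable def profile (A B₁ B₂ c ts T : ℝ) : ℝ :=
  ((T - ts) * exp (-T) - c) * B₂ + (ts ^ 2 * exp (-ts - T) / 2 - c) * B₁
    + (exp (-T) - exp (-ts - T) - c) * A

section Profile

variable {A B₁ B₂ c ts T : ℝ}

lemma profile_nonpos (hA : 0 ≤ A) (hB₁ : 0 ≤ B₁) (hB₂ : 0 ≤ B₂) (hc : 1 ≤ c) (hts₀ : 0 ≤ ts)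
    (htsT : ts ≤ T) (hT₁ : T ≤ 1) : profile A B₁ B₂ c ts T ≤ 0 := by
  have hT := exp_neg_mem_Icc (hts₀.trans htsT)
  have htsT' := exp_neg_mem_Icc (show 0 ≤ ts + T by linarith)
  rw [neg_add'] at htsT'
  have h₂ : (T - ts) * exp (-T) ≤ 1 := mul_le_one₀ (by linarith) hT.1 hT.2
  have h₁ : ts ^ 2 * exp (-ts - T) ≤ 1 := mul_le_one₀ (by nlinarith) htsT'.1 htsT'.2
  unfold profile
  nlinarith [mul_nonpos_of_nonpos_of_nonneg (by linarith : (T - ts) * exp (-T) - c ≤ 0) hB₂,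
    mul_nonpos_of_nonpos_of_nonneg (by linarith : ts ^ 2 * exp (-ts - T) / 2 - c ≤ 0) hB₁,
    mul_nonpos_of_nonpos_of_nonneg
      (by linarith [hT.2, htsT'.1] : exp (-T) - exp (-ts - T) - c ≤ 0) hA]

lemma mul_profile_le {μ ε : ℝ} {k n : ℕ} (hε₀ : 0 ≤ ε) (hε : ε ≤ 1 / 20) (hc : 23 ≤ c)
    (hμ : 0 ≤ μ) (hA : 0 ≤ A) (hB₁ : 0 ≤ B₁) (hB₂ : 0 ≤ B₂) (hts₀ : 0 ≤ ts) (htsT : ts ≤ T)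
    (hT₁ : T ≤ 1) (hk : (k : ℝ) * ε ∈ Icc ts (ts + ε)) (hn : (n : ℝ) * ε ∈ Icc T (T + ε))
    (hn₁ : n * ε ≤ 1) (hkn : k ≤ n) :
    μ * (1 - ε) ^ 2 * profile A B₁ B₂ (c * ε) ts T
      ≤ (1 - ε - 3 * ε ^ 2) ^ (n - k) * (μ * (A * discreteA ε k + B₁ * discreteB₁ ε k))
        + μ * B₂ * discreteB₂ ε k n := by
  have hq₀ : 0 ≤ (1 - ε) ^ 2 := sq_nonneg _
  have hq₁ : (1 - ε) ^ 2 ≤ 1 := by nlinarith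
  have hs₀ : 0 ≤ (1 - ε - 3 * ε ^ 2) ^ (n - k) := pow_nonneg (by nlinarith) _
  have hcε : 23 * ε ≤ c * ε := by gcongr
  have hA' := mul_le_of_le_of_le_one_of_nonneg hq₀ hq₁
    (mul_nonneg hs₀ (discreteA_nonneg hε₀ (by linarith) k))
    (show exp (-T) - exp (-ts - T) - c * ε ≤ _ by
      linarith [sub_le_pow_sub_mul_discreteA hε₀ hε hts₀ htsT hk hkn hn.2 hn₁])
  have hB₁' := mul_le_of_le_of_le_one_of_nonneg hq₀ hq₁
    (mul_nonneg hs₀ (discreteB₁_nonneg (ε := ε) (by linarith) k))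
    (show ts ^ 2 * exp (-ts - T) / 2 - c * ε ≤ _ by
      linarith [sub_le_pow_sub_mul_discreteB₁ hε₀ hε hts₀ htsT hT₁ hk hkn hn.2 hn₁])
  have hB₂' := mul_le_of_le_of_le_one_of_nonneg hq₀ hq₁ (discreteB₂_nonneg hε₀ (by linarith) hkn)
    (show (T - ts) * exp (-T) - c * ε ≤ _ by
      linarith [sub_le_discreteB₂ hε₀ hε hts₀ htsT hT₁ hk.2 hkn hn hn₁])
  unfold profile
  nlinarith [mul_le_mul_of_nonneg_left hA' (mul_nonneg hμ hA),
    mul_le_mul_of_nonneg_left hB₁' (mul_nonneg hμ hB₁),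
    mul_le_mul_of_nonneg_left hB₂' (mul_nonneg hμ hB₂)]

lemma mul_profile_le_of_steps {μ C E ε : ℝ} {N : ℕ} {v : ℕ → ℝ} (hε₀ : 0 < ε)
    (hε : ε ≤ 1 / 20) (hN : N * ε = 1) (hμ : 0 ≤ μ) (hA : 0 ≤ A) (hB₁ : 0 ≤ B₁) (hB₂ : 0 ≤ B₂)
    (hC : 0 ≤ C) (hE : 0 ≤ E) (hv₀ : 0 ≤ v 0)
    (hstep₁ : ∀ i < N, (1 - 2 * ε - 3 * ε ^ 2) * v i
        + (ε * μ * ((1 - ε) ^ (i + 1) * A + ε * (1 - ε) ^ (2 * i) * i * B₁) - C * ε ^ 2 * E)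
        ≤ v (i + 1))
    (hstep₂ : ∀ i < N,
      (1 - ε - 3 * ε ^ 2) * v i + (ε * μ * (1 - ε) ^ (i + 1) * B₂ - C * ε ^ 2 * E) ≤ v (i + 1))
    (hc : 23 ≤ c) (hts₀ : 0 ≤ ts) (htsT : ts ≤ T) (hT₁ : T ≤ 1) :
    ∃ n ≤ N, μ * (1 - ε) ^ 2 * profile A B₁ B₂ (c * ε) ts T ≤ v n + C * ε * E := by
  obtain ⟨hk, hkN⟩ := nat_ceil_mul_mem_Icc hε₀ hN hts₀ (htsT.trans hT₁)
  obtain ⟨hn, hnN⟩ := nat_ceil_mul_mem_Icc hε₀ hN (hts₀.trans htsT) hT₁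
  have hkn : ⌈ts * N⌉₊ ≤ ⌈T * N⌉₊ := Nat.ceil_mono (by gcongr)
  have hn₁ : (⌈T * N⌉₊ : ℝ) * ε ≤ 1 := hN ▸ by gcongr
  refine ⟨_, hnN, ?_⟩
  have hv := phase_two_le hε₀.le (by linarith) hμ hB₂ hC hE hN.le hstep₂
    (phase_one_le hε₀.le (by linarith) hμ hA hB₁ hC hE hN.le hv₀ hstep₁ hkN) hkn hnN
  have hnE : (⌈T * N⌉₊ : ℝ) * C * ε ^ 2 * E ≤ C * ε * E := by
    nlinarith [mul_le_mul_of_nonneg_right hn₁ (by positivity : 0 ≤ C * ε * E)]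
  linarith [mul_profile_le hε₀.le hε hc hμ hA hB₁ hB₂ hts₀ htsT hT₁ hk hn hn₁ hkn]

end Profile

lemma mul_sSup_le {S : Set ℝ} {a b : ℝ} (ha : 0 ≤ a) (hb : 0 ≤ b) (h : ∀ x ∈ S, a * x ≤ b) :
    a * sSup S ≤ b := by
  rw [← smul_eq_mul, ← Real.sSup_smul_of_nonneg ha]
  refine Real.sSup_le ?_ hb
  rintro _ ⟨x, hx, rfl⟩
  exact h x hx

/-- the final Corollary of Section 4.1, abstract form: with
`α = (1−m)(1−ε)²`, there are constants `C₁, C₂ > 0` depending only on `C` such that any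
nonnegative sequence `v₀, …, v_{1/ε}` satisfying the stated recursive lower bound satisfies
`(1 + C₁ε)·max_{0 ≤ i ≤ 1/ε} vᵢ ≥ α·max_{t_s ∈ [0,1]} max_{T ∈ [t_s,1]}
  {((T−t_s)e^{−T} − C₂ε)·B₂ + (t_s²e^{−t_s−T}/2 − C₂ε)·B₁ + (e^{−T} − e^{−t_s−T} − C₂ε)·A}
  − C₂ε·E` (maxima over real intervals taken as suprema). -/
theorem stmt_11 (C : ℝ) (hC : 0 < C) :
    ∃ C₁ C₂ : ℝ, 0 < C₁ ∧ 0 < C₂ ∧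
      ∀ (A B₁ B₂ E m ε : ℝ) (N : ℕ) (v : ℕ → ℝ),
        0 ≤ A → 0 ≤ B₁ → 0 ≤ B₂ → 0 ≤ E → 0 ≤ m → m < 1 → 0 < ε → ε < 1 →
        (N : ℝ) * ε = 1 →
        (∀ i ≤ N, 0 ≤ v i) →
        (∀ i, 1 ≤ i → i ≤ N →
          max (ε * (1 - m) * ((1 - ε)^i * A + ε * (1 - ε)^(2*i-2) * ((i : ℝ) - 1) * B₁)
                - 2*ε * v (i-1))
              (ε * (1 - m) * (1 - ε)^i * B₂ - ε * v (i-1))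
            - 3*ε^2 * v (i-1) - C*ε^2*E ≤ v i - v (i-1)) →
        (1 - m) * (1 - ε)^2 *
          sSup {x : ℝ | ∃ ts ∈ Set.Icc (0 : ℝ) 1, ∃ T ∈ Set.Icc ts 1,
            x = ((T - ts) * Real.exp (-T) - C₂*ε) * B₂
              + (ts^2 * Real.exp (-ts - T) / 2 - C₂*ε) * B₁
              + (Real.exp (-T) - Real.exp (-ts - T) - C₂*ε) * A}
          - C₂*ε*E
        ≤ (1 + C₁*ε) * sSup {x : ℝ | ∃ i ≤ N, x = v i} := by
  refine ⟨1, 23 + C, one_pos, by positivity, ?_⟩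
  intro A B₁ B₂ E m ε N v hA hB₁ hB₂ hE _ hm hε _ hN hv hrec
  set M := sSup {x : ℝ | ∃ i ≤ N, x = v i}
  have hvM : ∀ i ≤ N, v i ≤ M := fun i hi ↦ le_csSup (((Set.finite_le_nat N).image v).bddAbove.mono
    (by rintro _ ⟨j, hj, rfl⟩; exact ⟨j, hj, rfl⟩)) ⟨i, hi, rfl⟩
  have hM₀ : 0 ≤ M := (hv 0 N.zero_le).trans (hvM 0 N.zero_le)
  have hα : 0 ≤ (1 - m) * (1 - ε) ^ 2 := mul_nonneg (by linarith) (sq_nonneg _)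
  have key : ∀ ts ∈ Icc (0 : ℝ) 1, ∀ T ∈ Icc ts 1,
      (1 - m) * (1 - ε) ^ 2 * profile A B₁ B₂ ((23 + C) * ε) ts T ≤ M + (23 + C) * ε * E := by
    rintro ts ⟨hts₀, -⟩ T ⟨htsT, hT₁⟩
    rcases le_or_gt ε (1 / 20) with hsmall | hlarge
    · obtain ⟨n, hnN, hn⟩ := mul_profile_le_of_steps (c := 23 + C) hε hsmall hN (by linarith)
        hA hB₁ hB₂ hC.le hE (hv 0 N.zero_le) (fun i hi ↦ (steps_of_recursion hrec hi).1)
        (fun i hi ↦ (steps_of_recursion hrec hi).2) (by linarith) hts₀ htsT hT₁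
      nlinarith [hvM n hnN, mul_nonneg hε.le hE]
    · have := mul_nonpos_of_nonneg_of_nonpos hα
        (profile_nonpos hA hB₁ hB₂ (c := (23 + C) * ε) (by nlinarith) hts₀ htsT hT₁)
      have : 0 ≤ (23 + C) * ε * E := by positivity
      linarith
  calc _ ≤ M + (23 + C) * ε * E - (23 + C) * ε * E := by
        gcongr
        refine mul_sSup_le hα (by positivity) ?_
        rintro _ ⟨ts, hts, T, hT, rfl⟩
        exact key ts hts T hT
    _ ≤ (1 + 1 * ε) * M := by nlinarith
end
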